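/- arXiv:2509.01316 — 6 statements merged into one kernel-verified Lean document; each statement's English description precedes it below -/
import Mathlib

section
/- Suppose the nonnegative measurable kernel 𝒜 satisfies 𝒜(x,y;z)=0 for z>x and the sum-type bound 𝒜(x,y;z) ≤ A φ(z) for x+y<1 and 𝒜(x,y;z) ≤ A(x+y)φ(z) for x+y>1, where A ≥ 0 and φ is a nonnegative function in L¹((0,∞),(1+x)dx). Then every weak solution ζ of the continuous generalized exchange-driven growth equation with initial datum ζ^in ∈ L¹((0,∞),(1+x)dx) conserves mass: for all t > 0, ∫₀^∞ x ζ(t,x) dx = ∫₀^∞ x ζ^in(x) dx. -/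
open MeasureTheory Set Filter

/-- The quantity `𝒜(x,y;z) ζ(s,x) ζ(s,y)` appearing in the weak formulation. -/
noncomputable def kernelB (A : ℝ → ℝ → ℝ → ℝ) (ζ : ℝ → ℝ → ℝ) (s x y z : ℝ) : ℝ :=
  A x y z * ζ s x * ζ s y

/-- Right-hand side of the weak formulation of the continuous generalized
exchange-driven growth (CGEDG) equation, tested against `ω`. -/
noncomputable def weakRHS (A : ℝ → ℝ → ℝ → ℝ) (ζ : ℝ → ℝ → ℝ) (ω : ℝ → ℝ) (t : ℝ) : ℝ :=
  ∫ s in (0:ℝ)..t, ∫ x in Ioi (0:ℝ), ∫ y in Ioi (0:ℝ), ∫ z in Ioc (0:ℝ) x,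
    (ω (y + z) + ω (x - z) - ω x - ω y) * kernelB A ζ s x y z

/-- `ζ` is a weak solution of the CGEDG equation with kernel `A` and initial datum `ζin`:
nonnegative, lying in `L^∞(0,T; L¹((0,∞),(1+x)dx))` for each `T > 0`, weakly continuous
in time with values in `L¹`, and satisfying the weak form of the equation against every
bounded measurable test function. -/
structure IsWeakSolution (A : ℝ → ℝ → ℝ → ℝ) (ζin : ℝ → ℝ) (ζ : ℝ → ℝ → ℝ) : Prop where
  nonneg : ∀ t, 0 ≤ t → ∀ x, 0 ≤ ζ t x
  mem : ∀ t, 0 ≤ t → IntegrableOn (fun x => (1 + x) * ζ t x) (Ioi 0)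
  bdd : ∀ T, 0 < T → ∃ C : ℝ, ∀ t ∈ Icc (0:ℝ) T, ∫ x in Ioi (0:ℝ), (1 + x) * ζ t x ≤ C
  weakCont : ∀ ω : ℝ → ℝ, Measurable ω → (∃ M, ∀ x, |ω x| ≤ M) →
      ContinuousOn (fun t => ∫ x in Ioi (0:ℝ), ω x * ζ t x) (Ici 0)
  weakForm : ∀ ω : ℝ → ℝ, Measurable ω → (∃ M, ∀ x, |ω x| ≤ M) → ∀ t, 0 ≤ t →
      ∫ x in Ioi (0:ℝ), ω x * (ζ t x - ζin x) = weakRHS A ζ ω t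

/-!
Test the weak formulation against the truncated identity `ω_S x = max 0 (min x S)`. As `S → ∞`
the left-hand side tends to the change of mass `∫ x (ζ t x - ζin x)` by dominated convergence.
On the right, the exchange bracket `ω_S (y + z) + ω_S (x - z) - ω_S x - ω_S y` vanishes unless
`x` or `y` exceeds `S / 2` and is at most `z` in absolute value. Together with
`𝒜(x,y;z) ≤ c (1 + x + y) φ z` and `z (1 + x + y) ≤ (1 + z) (1 + x) (1 + y)`, this bounds the
exchange term at time `s` by `2 c ‖(1 + ·) φ‖₁ ‖(1 + ·) ζ s‖₁` times the tail
`∫_{S/2}^∞ (1 + y) ζ s y dy`, which tends to `0`; the bound on `‖(1 + ·) ζ s‖₁` uniform in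
`s ∈ [0, t]` lets dominated convergence carry this through the time integral.
-/

open scoped Interval Topology

noncomputable def truncate (S x : ℝ) : ℝ := max 0 (min x S)

lemma measurable_truncate (S : ℝ) : Measurable (truncate S) :=
  measurable_const.max (measurable_id.min measurable_const)

lemma truncate_nonneg (S x : ℝ) : 0 ≤ truncate S x := le_max_left _ _

lemma truncate_le_self {S x : ℝ} (hx : 0 ≤ x) : truncate S x ≤ x :=
  max_le hx (min_le_left _ _)

lemma abs_truncate_le (S x : ℝ) : |truncate S x| ≤ |S| := by
  unfold truncate; grind

lemma truncate_eq_self {S x : ℝ} (hx : 0 ≤ x) (hxS : x ≤ S) : truncate S x = x := by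
  rw [truncate, min_eq_left hxS, max_eq_right hx]

lemma truncate_sub_truncate_mem_Icc (S : ℝ) {a b : ℝ} (hab : a ≤ b) :
    truncate S b - truncate S a ∈ Icc 0 (b - a) := by
  unfold truncate; constructor <;> grind

lemma abs_truncate_exchange_le {S x y z : ℝ} (hz : 0 < z) (hzx : z ≤ x) (hy : 0 ≤ y) :
    |truncate S (y + z) + truncate S (x - z) - truncate S x - truncate S y|
      ≤ z * ((Ioi (S / 2)).indicator 1 x + (Ioi (S / 2)).indicator 1 y) := by
  by_cases hsmall : x ≤ S / 2 ∧ y ≤ S / 2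
  · obtain ⟨hxS, hyS⟩ := hsmall
    rw [truncate_eq_self (by linarith) (by linarith), truncate_eq_self (by linarith) (by linarith),
      truncate_eq_self (by linarith) (by linarith), truncate_eq_self hy (by linarith)]
    simp [indicator_of_notMem, hxS.not_gt, hyS.not_gt]
  · have hind : 1 ≤ (Ioi (S / 2)).indicator (1 : ℝ → ℝ) x + (Ioi (S / 2)).indicator 1 y := by
      simp only [indicator_apply, mem_Ioi, Pi.one_apply]
      split_ifs <;> grind
    obtain ⟨hy₀, hy₁⟩ := truncate_sub_truncate_mem_Icc S (by linarith : y ≤ y + z)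
    obtain ⟨hx₀, hx₁⟩ := truncate_sub_truncate_mem_Icc S (by linarith : x - z ≤ x)
    rw [abs_le]; constructor <;> nlinarith

lemma kernel_le_of_sum_bound {A : ℝ → ℝ → ℝ → ℝ} {φ : ℝ → ℝ} {c : ℝ} (hc : 0 ≤ c)
    (hφ : ∀ z, 0 ≤ φ z)
    (hsum₁ : ∀ x y z, 0 < x → 0 < y → 0 < z → x + y < 1 → A x y z ≤ c * φ z)
    (hsum₂ : ∀ x y z, 0 < x → 0 < y → 0 < z → 1 < x + y → A x y z ≤ c * (x + y) * φ z) :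
    ∀ x y z, 0 < x → 0 < y → 0 < z → x + y ≠ 1 → A x y z ≤ c * (1 + x + y) * φ z := by
  intro x y z hx hy hz hxy
  have hcφ : 0 ≤ c * φ z := mul_nonneg hc (hφ z)
  rcases hxy.lt_or_gt with hlt | hgt
  · nlinarith [hsum₁ x y z hx hy hz hlt]
  · nlinarith [hsum₂ x y z hx hy hz hgt]

lemma norm_truncate_exchange_mul_le {A : ℝ → ℝ → ℝ → ℝ} {φ Z : ℝ → ℝ} {c S x y z : ℝ}
    (hc : 0 ≤ c) (hφ : ∀ z, 0 ≤ φ z) (hA₀ : ∀ x y z, 0 ≤ A x y z)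
    (hA : ∀ x y z, 0 < x → 0 < y → 0 < z → x + y ≠ 1 → A x y z ≤ c * (1 + x + y) * φ z)
    (hZ : ∀ x, 0 ≤ Z x) (hx : 0 < x) (hy : 0 < y) (hxy : x + y ≠ 1) (hz : z ∈ Ioc 0 x) :
    ‖(truncate S (y + z) + truncate S (x - z) - truncate S x - truncate S y)
        * (A x y z * Z x * Z y)‖
      ≤ c * ((1 + z) * φ z) *
        ((Ioi (S / 2)).indicator (fun x => (1 + x) * Z x) x * ((1 + y) * Z y)
          + (1 + x) * Z x * (Ioi (S / 2)).indicator (fun y => (1 + y) * Z y) y) := by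
  obtain ⟨hz₀, hzx⟩ := hz
  set ι := (Ioi (S / 2)).indicator (1 : ℝ → ℝ)
  have hι : ∀ u, 0 ≤ ι u := fun u => indicator_nonneg (fun _ _ => zero_le_one) u
  have hweight : ∀ u, (Ioi (S / 2)).indicator (fun x => (1 + x) * Z x) u = ι u * ((1 + u) * Z u) :=
    fun u => by by_cases hu : u ∈ Ioi (S / 2) <;> simp [ι, hu]
  have hpoly : z * (1 + x + y) ≤ (1 + z) * ((1 + x) * (1 + y)) := by
    nlinarith [mul_nonneg hx.le hy.le, mul_nonneg (mul_nonneg hz₀.le hx.le) hy.le]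
  have hAZ : 0 ≤ A x y z * Z x * Z y := mul_nonneg (mul_nonneg (hA₀ x y z) (hZ x)) (hZ y)
  have hcφZ : 0 ≤ c * φ z * (ι x + ι y) * Z x * Z y :=
    mul_nonneg (mul_nonneg (mul_nonneg (mul_nonneg hc (hφ z)) (add_nonneg (hι x) (hι y))) (hZ x))
      (hZ y)
  rw [norm_mul, Real.norm_eq_abs, Real.norm_of_nonneg hAZ, hweight, hweight]
  calc _ ≤ z * (ι x + ι y) * (c * (1 + x + y) * φ z * Z x * Z y) :=
        mul_le_mul (abs_truncate_exchange_le hz₀ hzx hy.le)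
          (by gcongr; exacts [hZ y, hZ x, hA x y z hx hy hz₀ hxy]) hAZ
          (mul_nonneg hz₀.le (add_nonneg (hι x) (hι y)))
    _ = c * φ z * (ι x + ι y) * Z x * Z y * (z * (1 + x + y)) := by ring
    _ ≤ c * φ z * (ι x + ι y) * Z x * Z y * ((1 + z) * ((1 + x) * (1 + y))) := by gcongr
    _ = _ := by ring
lemma setIntegral_Ioi_indicator_Ioi {w : ℝ → ℝ} {R : ℝ} (hR : 0 ≤ R) :
    ∫ y in Ioi 0, (Ioi R).indicator w y = ∫ y in Ioi R, w y := by
  rw [setIntegral_indicator measurableSet_Ioi, Ioi_inter_Ioi, max_eq_right hR]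

lemma norm_integral_Ioi_Ioi_Ioc_le {G : ℝ → ℝ → ℝ → ℝ} {g w : ℝ → ℝ} {R : ℝ} (hR : 0 ≤ R)
    (hg : IntegrableOn g (Ioi 0)) (hg₀ : ∀ z, 0 < z → 0 ≤ g z)
    (hw : IntegrableOn w (Ioi 0)) (hw₀ : ∀ x, 0 < x → 0 ≤ w x)
    (hG : ∀ x, 0 < x → ∀ᵐ y ∂volume.restrict (Ioi 0), ∀ z ∈ Ioc 0 x,
      ‖G x y z‖ ≤ g z * ((Ioi R).indicator w x * w y + w x * (Ioi R).indicator w y)) :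
    ‖∫ x in Ioi 0, ∫ y in Ioi 0, ∫ z in Ioc 0 x, G x y z‖
      ≤ 2 * (∫ z in Ioi 0, g z) * (∫ x in Ioi 0, w x) * ∫ y in Ioi R, w y := by
  set Ig := ∫ z in Ioi 0, g z
  set W := ∫ x in Ioi 0, w x
  set T := ∫ y in Ioi R, w y
  have hwR : IntegrableOn ((Ioi R).indicator w) (Ioi 0) := hw.indicator measurableSet_Ioi
  have hT : ∫ y in Ioi 0, (Ioi R).indicator w y = T := setIntegral_Ioi_indicator_Ioi hR
  have hwR₀ : ∀ x, 0 < x → 0 ≤ (Ioi R).indicator w x := fun x hx =>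
    indicator_nonneg (fun u hu => hw₀ u (hR.trans_lt hu)) x
  have hz : ∀ x, 0 < x → ∀ᵐ y ∂volume.restrict (Ioi 0), ‖∫ z in Ioc 0 x, G x y z‖
      ≤ Ig * ((Ioi R).indicator w x * w y + w x * (Ioi R).indicator w y) := by
    intro x hx
    filter_upwards [hG x hx, ae_restrict_mem measurableSet_Ioi] with y hGy hy
    set K := (Ioi R).indicator w x * w y + w x * (Ioi R).indicator w y
    have hK : 0 ≤ K := add_nonneg (mul_nonneg (hwR₀ x hx) (hw₀ y hy))
      (mul_nonneg (hw₀ x hx) (hwR₀ y hy))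
    calc ‖∫ z in Ioc 0 x, G x y z‖ ≤ ∫ z in Ioc 0 x, g z * K :=
          norm_integral_le_of_norm_le ((hg.mono_set Ioc_subset_Ioi_self).mul_const K)
            ((ae_restrict_mem measurableSet_Ioc).mono hGy)
      _ = (∫ z in Ioc 0 x, g z) * K := integral_mul_const K g
      _ ≤ Ig * K := by
          gcongr
          exact setIntegral_mono_set hg ((ae_restrict_mem measurableSet_Ioi).mono hg₀)
            Ioc_subset_Ioi_self.eventuallyLE
  have hy : ∀ x, 0 < x → ‖∫ y in Ioi 0, ∫ z in Ioc 0 x, G x y z‖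
      ≤ Ig * ((Ioi R).indicator w x * W + w x * T) := by
    intro x hx
    calc _ ≤ ∫ y in Ioi 0, Ig * ((Ioi R).indicator w x * w y + w x * (Ioi R).indicator w y) :=
          norm_integral_le_of_norm_le
            (((hw.const_mul _).add (hwR.const_mul _)).const_mul _) (hz x hx)
      _ = _ := by
          rw [integral_const_mul, integral_add (hw.const_mul _) (hwR.const_mul _),
            integral_const_mul, integral_const_mul, hT]
  calc _ ≤ ∫ x in Ioi 0, Ig * ((Ioi R).indicator w x * W + w x * T) :=
        norm_integral_le_of_norm_le (((hwR.mul_const _).add (hw.mul_const _)).const_mul _)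
          ((ae_restrict_mem measurableSet_Ioi).mono hy)
    _ = Ig * (T * W + W * T) := by
        rw [integral_const_mul, integral_add (hwR.mul_const _) (hw.mul_const _),
          integral_mul_const, integral_mul_const, hT]
    _ = _ := by ring

noncomputable def exchangeTerm (A : ℝ → ℝ → ℝ → ℝ) (ζ : ℝ → ℝ → ℝ) (ω : ℝ → ℝ) (s : ℝ) : ℝ :=
  ∫ x in Ioi (0:ℝ), ∫ y in Ioi (0:ℝ), ∫ z in Ioc (0:ℝ) x,
    (ω (y + z) + ω (x - z) - ω x - ω y) * kernelB A ζ s x y z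

lemma norm_exchangeTerm_truncate_le {A : ℝ → ℝ → ℝ → ℝ} {φ : ℝ → ℝ} {ζ : ℝ → ℝ → ℝ}
    {c S s : ℝ} (hc : 0 ≤ c) (hφ : ∀ z, 0 ≤ φ z)
    (hφ_int : IntegrableOn (fun z => (1 + z) * φ z) (Ioi 0)) (hA₀ : ∀ x y z, 0 ≤ A x y z)
    (hA : ∀ x y z, 0 < x → 0 < y → 0 < z → x + y ≠ 1 → A x y z ≤ c * (1 + x + y) * φ z)
    (hζ₀ : ∀ x, 0 ≤ ζ s x) (hζ : IntegrableOn (fun x => (1 + x) * ζ s x) (Ioi 0))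
    (hS : 0 ≤ S) :
    ‖exchangeTerm A ζ (truncate S) s‖
      ≤ 2 * (∫ z in Ioi 0, c * ((1 + z) * φ z)) * (∫ x in Ioi 0, (1 + x) * ζ s x)
        * ∫ y in Ioi (S / 2), (1 + y) * ζ s y := by
  refine norm_integral_Ioi_Ioi_Ioc_le (by positivity) (hφ_int.const_mul c)
    (fun z hz => mul_nonneg hc (mul_nonneg (by linarith) (hφ z))) hζ
    (fun x hx => mul_nonneg (by linarith) (hζ₀ x)) fun x hx => ?_
  filter_upwards [Measure.ae_ne _ (1 - x), ae_restrict_mem measurableSet_Ioi] with y hxy hy z hz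
  exact norm_truncate_exchange_mul_le hc hφ hA₀ hA hζ₀ hx hy (by contrapose! hxy; linarith) hz

lemma tendsto_setIntegral_Ioi_atTop {w : ℝ → ℝ} {a : ℝ} (hw : IntegrableOn w (Ioi a)) :
    Tendsto (fun R => ∫ y in Ioi R, w y) atTop (𝓝 0) := by
  have hempty : ⋂ R : ℝ, Ioi R = ∅ := eq_empty_of_forall_notMem fun y hy =>
    lt_irrefl y (mem_iInter.1 hy y)
  simpa [hempty] using tendsto_setIntegral_of_antitone (fun R => measurableSet_Ioi)
    (fun _ _ h => Ioi_subset_Ioi h) ⟨a, hw⟩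

lemma tendsto_intervalIntegral_zero_of_norm_le {ι E : Type*} {l : Filter ι}
    [l.IsCountablyGenerated] [NormedAddCommGroup E] [NormedSpace ℝ E] {F : ι → ℝ → E}
    {b : ι → ℝ → ℝ} {t B : ℝ} (ht : 0 ≤ t)
    (hFb : ∀ᶠ i in l, ∀ s ∈ Ioc 0 t, ‖F i s‖ ≤ b i s)
    (hbB : ∀ᶠ i in l, ∀ s ∈ Ioc 0 t, b i s ≤ B)
    (hb : ∀ s ∈ Ioc 0 t, Tendsto (fun i => b i s) l (𝓝 0)) :
    Tendsto (fun i => ∫ s in 0..t, F i s) l (𝓝 0) := by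
  classical
  -- `F i` need not be measurable; replacing a non-integrable `F i` by `0` changes neither its
  -- integral (both are `0`) nor the bounds, and makes dominated convergence applicable.
  set G : ι → ℝ → E := fun i => if IntervalIntegrable (F i) volume 0 t then F i else 0
  have hFG : ∀ i, ∫ s in 0..t, F i s = ∫ s in 0..t, G i s := fun i => by
    by_cases h : IntervalIntegrable (F i) volume 0 t
    · simp [G, h]
    · simp [G, h, intervalIntegral.integral_undef h]
  have hGF : ∀ i s, ‖G i s‖ ≤ ‖F i s‖ := fun i s => by
    by_cases h : IntervalIntegrable (F i) volume 0 t <;> simp [G, h]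
  have hG_meas : ∀ i, AEStronglyMeasurable (G i) (volume.restrict (Ι 0 t)) := fun i => by
    by_cases h : IntervalIntegrable (F i) volume 0 t
    · simpa only [G, if_pos h] using h.def'.aestronglyMeasurable
    · simp only [G, if_neg h]
      exact aestronglyMeasurable_const
  have hlim := intervalIntegral.tendsto_integral_filter_of_dominated_convergence
    (f := fun _ => (0 : E)) (fun _ => B) (Eventually.of_forall hG_meas)
    ((hFb.and hbB).mono fun i hi => ae_of_all _ fun s hs => by
      rw [uIoc_of_le ht] at hs
      exact (hGF i s).trans ((hi.1 s hs).trans (hi.2 s hs)))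
    intervalIntegrable_const
    (ae_of_all _ fun s hs => by
      rw [uIoc_of_le ht] at hs
      exact squeeze_zero_norm' (hFb.mono fun i hi => (hGF i s).trans (hi s hs)) (hb s hs))
  rw [intervalIntegral.integral_zero] at hlim
  exact (tendsto_congr hFG).mpr hlim

lemma integrableOn_mul_of_abs_le_one_add {f g : ℝ → ℝ}
    (hg : IntegrableOn (fun x => (1 + x) * g x) (Ioi 0)) (hf : Measurable f)
    (hfg : ∀ x, 0 < x → |f x| ≤ 1 + x) : IntegrableOn (fun x => f x * g x) (Ioi 0) := by
  have hg_meas : AEStronglyMeasurable g (volume.restrict (Ioi 0)) := by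
    have hinv : Measurable fun x : ℝ => (1 + x)⁻¹ := by fun_prop
    refine (hinv.aestronglyMeasurable.mul hg.aestronglyMeasurable).congr ?_
    filter_upwards [ae_restrict_mem measurableSet_Ioi] with x hx
    have : (1 : ℝ) + x ≠ 0 := by linarith [mem_Ioi.1 hx]
    simp [this]
  refine hg.norm.mono' (hf.aestronglyMeasurable.mul hg_meas) ?_
  filter_upwards [ae_restrict_mem measurableSet_Ioi] with x hx
  have hx₁ : 0 < 1 + x := by linarith [mem_Ioi.1 hx]
  simp only [norm_mul, Real.norm_eq_abs, abs_of_pos hx₁]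
  exact mul_le_mul_of_nonneg_right (hfg x hx) (abs_nonneg _)

lemma integrableOn_id_mul_of_one_add_mul {g : ℝ → ℝ}
    (hg : IntegrableOn (fun x => (1 + x) * g x) (Ioi 0)) :
    IntegrableOn (fun x => x * g x) (Ioi 0) :=
  integrableOn_mul_of_abs_le_one_add hg measurable_id fun x hx => by
    rw [abs_of_pos hx]; linarith

lemma tendsto_integral_truncate_mul {g : ℝ → ℝ}
    (hg : IntegrableOn (fun x => (1 + x) * g x) (Ioi 0)) :
    Tendsto (fun S => ∫ x in Ioi 0, truncate S x * g x) atTop (𝓝 (∫ x in Ioi 0, x * g x)) := by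
  have habs : ∀ S x, 0 < x → |truncate S x| ≤ 1 + x := fun S x hx => by
    rw [abs_of_nonneg (truncate_nonneg S x)]; linarith [truncate_le_self (S := S) hx.le]
  refine tendsto_integral_filter_of_dominated_convergence (fun x => ‖(1 + x) * g x‖)
    (Eventually.of_forall fun S =>
      (integrableOn_mul_of_abs_le_one_add hg (measurable_truncate S) (habs S)).aestronglyMeasurable)
    (Eventually.of_forall fun S => ?_) hg.norm ?_
  · filter_upwards [ae_restrict_mem measurableSet_Ioi] with x hx
    have hx₁ : 0 < 1 + x := by linarith [mem_Ioi.1 hx]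
    simp only [norm_mul, Real.norm_eq_abs, abs_of_pos hx₁]
    exact mul_le_mul_of_nonneg_right (habs S x hx) (abs_nonneg _)
  · filter_upwards [ae_restrict_mem measurableSet_Ioi] with x hx
    refine Tendsto.mul_const _ (tendsto_const_nhds.congr' ?_)
    filter_upwards [eventually_ge_atTop x] with S hS
    exact (truncate_eq_self (le_of_lt hx) hS).symm

lemma IsWeakSolution.tendsto_weakRHS_truncate {A : ℝ → ℝ → ℝ → ℝ} {φ ζin : ℝ → ℝ}
    {ζ : ℝ → ℝ → ℝ} {c t : ℝ} (hζ : IsWeakSolution A ζin ζ) (hc : 0 ≤ c)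
    (hφ : ∀ z, 0 ≤ φ z) (hφ_int : IntegrableOn (fun z => (1 + z) * φ z) (Ioi 0))
    (hA₀ : ∀ x y z, 0 ≤ A x y z)
    (hA : ∀ x y z, 0 < x → 0 < y → 0 < z → x + y ≠ 1 → A x y z ≤ c * (1 + x + y) * φ z)
    (ht : 0 < t) :
    Tendsto (fun S => weakRHS A ζ (truncate S) t) atTop (𝓝 0) := by
  obtain ⟨C, hC⟩ := hζ.bdd t ht
  set Cφ := ∫ z in Ioi 0, c * ((1 + z) * φ z)
  have hCφ : 0 ≤ Cφ := setIntegral_nonneg measurableSet_Ioi fun z hz =>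
    mul_nonneg hc (mul_nonneg (by linarith [mem_Ioi.1 hz]) (hφ z))
  refine tendsto_intervalIntegral_zero_of_norm_le (F := fun S => exchangeTerm A ζ (truncate S))
    (b := fun S s => 2 * Cφ * (∫ x in Ioi 0, (1 + x) * ζ s x) * ∫ y in Ioi (S / 2), (1 + y) * ζ s y)
    (B := 2 * Cφ * C * C) ht.le ?_ ?_ fun s hs => ?_
  · filter_upwards [eventually_ge_atTop 0] with S hS s hs
    exact norm_exchangeTerm_truncate_le hc hφ hφ_int hA₀ hA (hζ.nonneg s hs.1.le)
      (hζ.mem s hs.1.le) hS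
  · filter_upwards [eventually_ge_atTop 0] with S hS s hs
    have hw₀ : ∀ x ∈ Ioi (0 : ℝ), 0 ≤ (1 + x) * ζ s x := fun x hx =>
      mul_nonneg (by linarith [mem_Ioi.1 hx]) (hζ.nonneg s hs.1.le x)
    have hP : ∫ x in Ioi 0, (1 + x) * ζ s x ≤ C := hC s (Ioc_subset_Icc_self hs)
    have hT₀ : 0 ≤ ∫ y in Ioi (S / 2), (1 + y) * ζ s y := setIntegral_nonneg measurableSet_Ioi
      fun y hy => hw₀ y ((by positivity : (0 : ℝ) ≤ S / 2).trans_lt hy)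
    have hTP : ∫ y in Ioi (S / 2), (1 + y) * ζ s y ≤ ∫ x in Ioi 0, (1 + x) * ζ s x :=
      setIntegral_mono_set (hζ.mem s hs.1.le) ((ae_restrict_mem measurableSet_Ioi).mono hw₀)
        (Ioi_subset_Ioi (by positivity)).eventuallyLE
    have hC₀ : 0 ≤ C := hT₀.trans (hTP.trans hP)
    gcongr
    exact hTP.trans hP
  · simpa using ((tendsto_setIntegral_Ioi_atTop (hζ.mem s hs.1.le)).comp
      (tendsto_id.atTop_div_const two_pos)).const_mul _

theorem conservation_of_mass_general
    (A : ℝ → ℝ → ℝ → ℝ) (φ ζin : ℝ → ℝ) (c : ℝ) (hc : 0 ≤ c)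
    (hA_nonneg : ∀ x y z, 0 ≤ A x y z)
    (hφ_nonneg : ∀ x, 0 ≤ φ x)
    (hφ_int : IntegrableOn (fun x => (1 + x) * φ x) (Ioi 0))
    (hζin_int : IntegrableOn (fun x => (1 + x) * ζin x) (Ioi 0))
    (hsum₁ : ∀ x y z, 0 < x → 0 < y → 0 < z → x + y < 1 → A x y z ≤ c * φ z)
    (hsum₂ : ∀ x y z, 0 < x → 0 < y → 0 < z → 1 < x + y → A x y z ≤ c * (x + y) * φ z) :
    ∀ ζ : ℝ → ℝ → ℝ, IsWeakSolution A ζin ζ → ∀ t, 0 < t →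
      ∫ x in Ioi (0:ℝ), x * ζ t x = ∫ x in Ioi (0:ℝ), x * ζin x := by
  intro ζ hζ t ht
  have hζt := hζ.mem t ht.le
  have hweak : ∀ S, ∫ x in Ioi 0, truncate S x * (ζ t x - ζin x) = weakRHS A ζ (truncate S) t :=
    fun S => hζ.weakForm _ (measurable_truncate S) ⟨|S|, abs_truncate_le S⟩ t ht.le
  have hdiff : ∫ x in Ioi 0, x * (ζ t x - ζin x) = 0 := by
    refine tendsto_nhds_unique ((tendsto_integral_truncate_mul ?_).congr hweak)
      (hζ.tendsto_weakRHS_truncate hc hφ_nonneg hφ_int hA_nonneg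
        (kernel_le_of_sum_bound hc hφ_nonneg hsum₁ hsum₂) ht)
    simpa only [Pi.sub_def, mul_sub] using hζt.sub hζin_int
  rw [← sub_eq_zero, ← integral_sub (integrableOn_id_mul_of_one_add_mul hζt)
    (integrableOn_id_mul_of_one_add_mul hζin_int)]
  simpa only [mul_sub] using hdiff

/-- **Conservation of mass.** Under the sum-type bound on the kernel, every weak solution
of the CGEDG equation satisfies `∫₀^∞ x ζ(t,x) dx = ∫₀^∞ x ζin(x) dx` for all `t > 0`. -/
theorem conservation_of_mass
    (A : ℝ → ℝ → ℝ → ℝ) (φ ζin : ℝ → ℝ) (c : ℝ) (hc : 0 ≤ c)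
    (hA_meas : Measurable (fun p : ℝ × ℝ × ℝ => A p.1 p.2.1 p.2.2))
    (hA_nonneg : ∀ x y z, 0 ≤ A x y z)
    (hφ_nonneg : ∀ x, 0 ≤ φ x)
    (hφ_int : IntegrableOn (fun x => (1 + x) * φ x) (Ioi 0))
    (hζin_nonneg : ∀ x, 0 ≤ ζin x)
    (hζin_int : IntegrableOn (fun x => (1 + x) * ζin x) (Ioi 0))
    (hphys : ∀ x y z, x < z → A x y z = 0)
    (hsum₁ : ∀ x y z, 0 < x → 0 < y → 0 < z → x + y < 1 → A x y z ≤ c * φ z)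
    (hsum₂ : ∀ x y z, 0 < x → 0 < y → 0 < z → 1 < x + y → A x y z ≤ c * (x + y) * φ z) :
    ∀ ζ : ℝ → ℝ → ℝ, IsWeakSolution A ζin ζ → ∀ t, 0 < t →
      ∫ x in Ioi (0:ℝ), x * ζ t x = ∫ x in Ioi (0:ℝ), x * ζin x :=
  conservation_of_mass_general A φ ζin c hc hA_nonneg hφ_nonneg hφ_int hζin_int hsum₁ hsum₂
end

section
/- Let σ : [0,∞) → [0,∞) be a C² function that is nonnegative, convex and nondecreasing, with σ(0) = σ'(0) = 0, and such that σ' is concave. Then for all x, y > 0: x σ'(y) ≤ σ(x) + σ(y). -/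
/-!
By convexity, `σ` lies above its tangent at `y`, so `x σ'(y) ≤ σ(x) - σ(y) + y σ'(y)` and it
suffices to show `y σ'(y) ≤ 2 σ(y)`. Concavity of `σ'` with `σ'(0) = 0` puts `σ'` above its chord
on `[0, y]`, i.e. `σ'(t) ≥ (t / y) σ'(y)`. Hence `σ(t) - σ'(y) t² / (2y)` is nondecreasing on
`[0, y]`, and comparing its values at `0` and `y` gives `σ(y) ≥ y σ'(y) / 2`.
-/

open Set

theorem ConvexOn.add_mul_sub_le_of_hasDerivWithinAt {S : Set ℝ} {f : ℝ → ℝ} {d x y : ℝ}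
    (hf : ConvexOn ℝ S f) (hx : x ∈ S) (hy : y ∈ S) (hd : HasDerivWithinAt f d S x) :
    f x + d * (y - x) ≤ f y := by
  rcases lt_trichotomy x y with hxy | rfl | hyx
  · have hslope := hf.le_slope_of_hasDerivWithinAt hx hy hxy hd
    rw [slope_def_field, le_div_iff₀ (sub_pos.mpr hxy)] at hslope
    linarith
  · simp
  · have hslope := hf.slope_le_of_hasDerivWithinAt hy hx hyx hd
    rw [slope_def_field, div_le_iff₀ (sub_pos.mpr hyx)] at hslope
    linarith

theorem ConcaveOn.div_mul_le_of_map_zero {S : Set ℝ} {g : ℝ → ℝ} {t y : ℝ}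
    (hg : ConcaveOn ℝ S g) (h0S : 0 ∈ S) (hyS : y ∈ S) (hg0 : g 0 = 0)
    (ht : 0 ≤ t) (hty : t ≤ y) : t / y * g y ≤ g t := by
  rcases ht.eq_or_lt with rfl | htpos
  · simp [hg0]
  have hy : 0 < y := htpos.trans_le hty
  have hchord := hg.2 h0S hyS (sub_nonneg.mpr ((div_le_one hy).mpr hty))
    (div_nonneg ht hy.le) (sub_add_cancel 1 (t / y))
  have hpoint : t / y * y = t := div_mul_cancel₀ t hy.ne'
  simpa only [hpoint, smul_eq_mul, hg0, mul_zero, zero_add] using hchord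

theorem mul_le_two_mul_of_hasDerivWithinAt_of_concaveOn {f f' : ℝ → ℝ} {y : ℝ}
    (hf : ∀ x ∈ Ici (0 : ℝ), HasDerivWithinAt f (f' x) (Ici 0) x)
    (hf0 : f 0 = 0) (hf'0 : f' 0 = 0) (hf' : ConcaveOn ℝ (Ici 0) f') (hy : 0 ≤ y) :
    y * f' y ≤ 2 * f y := by
  rcases hy.eq_or_lt with rfl | hypos
  · simp [hf0]
  set c := f' y / y
  have hcont : ContinuousOn (fun t => f t - c * t ^ 2 / 2) (Icc 0 y) :=
    ((HasDerivWithinAt.continuousOn hf).mono Icc_subset_Ici_self).sub (by fun_prop)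
  have hderiv : ∀ t ∈ interior (Icc 0 y),
      HasDerivWithinAt (fun t => f t - c * t ^ 2 / 2) (f' t - c * t) (interior (Icc 0 y)) t := by
    intro t ht
    rw [interior_Icc] at ht ⊢
    have hft := (hf t ht.1.le).hasDerivAt (Ici_mem_nhds ht.1)
    have hquad : HasDerivAt (fun t => c * t ^ 2 / 2) (c * t) t :=
      (((hasDerivAt_pow 2 t).const_mul c).div_const 2).congr_deriv (by push_cast; ring)
    exact (hft.sub hquad).hasDerivWithinAt
  have hderiv_nonneg : ∀ t ∈ interior (Icc 0 y), 0 ≤ f' t - c * t := by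
    intro t ht
    rw [interior_Icc] at ht
    have hchord := hf'.div_mul_le_of_map_zero self_mem_Ici hy hf'0 ht.1.le ht.2.le
    rw [div_mul_comm] at hchord
    exact sub_nonneg.mpr hchord
  have hmono := monotoneOn_of_hasDerivWithinAt_nonneg (convex_Icc 0 y) hcont hderiv hderiv_nonneg
  have hends := hmono (left_mem_Icc.mpr hy) (right_mem_Icc.mpr hy) hy
  have hc : c * y ^ 2 = y * f' y := by simp only [c]; field_simp
  simp only [hf0] at hends
  linarith

theorem convex_fn_ineq_two_general (σ σ' : ℝ → ℝ)
    (hderiv : ∀ x ∈ Ici (0:ℝ), HasDerivWithinAt σ (σ' x) (Ici 0) x)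
    (hconv : ConvexOn ℝ (Ici 0) σ)
    (h0 : σ 0 = 0) (h0' : σ' 0 = 0)
    (hconc : ConcaveOn ℝ (Ici 0) σ') :
    ∀ x y : ℝ, 0 < x → 0 < y → x * σ' y ≤ σ x + σ y := by
  intro x y hx hy
  have htangent := hconv.add_mul_sub_le_of_hasDerivWithinAt hy.le hx.le (hderiv y hy.le)
  have hhalf := mul_le_two_mul_of_hasDerivWithinAt_of_concaveOn hderiv h0 h0' hconc hy.le
  linear_combination htangent + hhalf

/-- For a nonnegative, convex, nondecreasing `C²` function `σ` on `[0,∞)` with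
`σ(0) = σ'(0) = 0` and concave derivative `σ'`, one has `x σ'(y) ≤ σ(x) + σ(y)`
for all `x, y > 0`. -/
theorem convex_fn_ineq_two (σ σ' : ℝ → ℝ)
    (hC2 : ContDiffOn ℝ 2 σ (Ici 0))
    (hderiv : ∀ x ∈ Ici (0:ℝ), HasDerivWithinAt σ (σ' x) (Ici 0) x)
    (hnonneg : ∀ x ∈ Ici (0:ℝ), 0 ≤ σ x)
    (hconv : ConvexOn ℝ (Ici 0) σ)
    (hmono : MonotoneOn σ (Ici 0))
    (h0 : σ 0 = 0) (h0' : σ' 0 = 0)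
    (hconc : ConcaveOn ℝ (Ici 0) σ') :
    ∀ x y : ℝ, 0 < x → 0 < y → x * σ' y ≤ σ x + σ y :=
  convex_fn_ineq_two_general σ σ' hderiv hconv h0 h0' hconc
end

section
/- Let σ : [0,∞) → [0,∞) be a C² function that is nonnegative, convex and nondecreasing, with σ(0) = σ'(0) = 0, and such that σ' is concave. Then for all x, y > 0: 0 ≤ σ(x+y) − σ(x) − σ(y) ≤ 2 (x σ(y) + y σ(x)) / (x + y). -/
/-!
Write `D = σ(x+y) − σ(x) − σ(y)`. Superadditivity of the convex `σ` gives `0 ≤ D`. For the upper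
bound, `σ'` is concave with `σ'(0) = 0`, hence subadditive, so `t ↦ σ(t+y) − σ(t) − tσ'(y)` is
antitone and `D ≤ xσ'(y)`; symmetrically `D ≤ yσ'(x)`. Concavity also gives `σ'(s) ≥ (s/t)σ'(t)` on
`[0,t]`, so `s ↦ σ(s) − s²σ'(t)/(2t)` is monotone there and `tσ'(t) ≤ 2σ(t)`. Hence
`(x+y)D = yD + xD ≤ xyσ'(y) + xyσ'(x) ≤ 2xσ(y) + 2yσ(x)`.
-/

open Set

section ScaleAtZero

variable {E : Type*} [AddCommGroup E] [Module ℝ E] {s : Set E} {f : E → ℝ} {x : E} {t : ℝ}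

theorem ConvexOn.map_smul_le (hf : ConvexOn ℝ s f) (h0s : (0 : E) ∈ s) (hf0 : f 0 ≤ 0)
    (hx : x ∈ s) (ht₀ : 0 ≤ t) (ht₁ : t ≤ 1) : f (t • x) ≤ t * f x := by
  have h := hf.2 hx h0s ht₀ (sub_nonneg.2 ht₁) (add_sub_cancel t 1)
  simp only [smul_zero, add_zero, smul_eq_mul] at h
  nlinarith

theorem ConcaveOn.smul_le_map_smul (hf : ConcaveOn ℝ s f) (h0s : (0 : E) ∈ s) (hf0 : 0 ≤ f 0)
    (hx : x ∈ s) (ht₀ : 0 ≤ t) (ht₁ : t ≤ 1) : t * f x ≤ f (t • x) := by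
  have h := hf.neg.map_smul_le h0s (by simpa using hf0) hx ht₀ ht₁
  simp only [Pi.neg_apply, mul_neg] at h
  linarith

end ScaleAtZero

theorem ConvexOn.add_le_map_add {f : ℝ → ℝ} (hf : ConvexOn ℝ (Ici 0) f) (hf0 : f 0 ≤ 0)
    {a b : ℝ} (ha : 0 ≤ a) (hb : 0 ≤ b) : f a + f b ≤ f (a + b) := by
  rcases (add_nonneg ha hb).eq_or_lt with hab | hab
  · obtain ⟨rfl, rfl⟩ : a = 0 ∧ b = 0 := ⟨by linarith, by linarith⟩
    simpa using hf0
  have hscale : ∀ c, 0 ≤ c → c ≤ a + b → f c ≤ c / (a + b) * f (a + b) := fun c hc₀ hc₁ => by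
    have h := hf.map_smul_le self_mem_Ici hf0 (mem_Ici.2 hab.le) (div_nonneg hc₀ hab.le)
      ((div_le_one hab).2 hc₁)
    rwa [smul_eq_mul, div_mul_cancel₀ _ hab.ne'] at h
  calc f a + f b ≤ a / (a + b) * f (a + b) + b / (a + b) * f (a + b) :=
        add_le_add (hscale a ha (by linarith)) (hscale b hb (by linarith))
    _ = f (a + b) := by field_simp

theorem ConcaveOn.map_add_le_add {f : ℝ → ℝ} (hf : ConcaveOn ℝ (Ici 0) f) (hf0 : 0 ≤ f 0)
    {a b : ℝ} (ha : 0 ≤ a) (hb : 0 ≤ b) : f (a + b) ≤ f a + f b := by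
  have h := hf.neg.add_le_map_add (by simpa using hf0) ha hb
  simp only [Pi.neg_apply] at h
  linarith

section ConcaveDeriv

variable {f f' : ℝ → ℝ} (hcont : ContinuousOn f (Ici 0))
  (hderiv : ∀ x, 0 < x → HasDerivAt f (f' x) x)
  (hconc : ConcaveOn ℝ (Ici 0) f') (hf'0 : 0 ≤ f' 0)
include hcont hderiv hconc hf'0

theorem sub_sub_mul_deriv_le {a b : ℝ} (ha : 0 ≤ a) (hb : 0 ≤ b) :
    f (a + b) - f a - a * f' b ≤ f b - f 0 := by
  let g : ℝ → ℝ := fun t => f (t + b) - f t - t * f' b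
  have hg : AntitoneOn g (Ici 0) := by
    refine antitoneOn_of_hasDerivWithinAt_nonpos (convex_Ici 0)
      (f' := fun t => f' (t + b) - f' t - f' b) ?_ (fun t ht => ?_) (fun t ht => ?_)
    · refine ((hcont.comp (by fun_prop) fun t ht => ?_).sub hcont).sub (by fun_prop)
      exact mem_Ici.2 (add_nonneg ht hb)
    · rw [interior_Ici] at ht ⊢
      have ht' : 0 < t + b := add_pos_of_pos_of_nonneg ht hb
      have := ((hderiv _ ht').comp_add_const t b).sub (hderiv t ht) |>.sub
        ((hasDerivAt_id t).mul_const (f' b))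
      exact (this.congr_deriv (by ring)).hasDerivWithinAt
    · rw [interior_Ici] at ht
      linarith [hconc.map_add_le_add hf'0 ht.le hb]
  simpa [g] using hg self_mem_Ici (mem_Ici.2 ha) ha

theorem mul_deriv_le_two_mul_sub {c : ℝ} (hc : 0 < c) : c * f' c ≤ 2 * (f c - f 0) := by
  let k : ℝ → ℝ := fun s => f s - s ^ 2 * f' c / (2 * c)
  have hk : MonotoneOn k (Icc 0 c) := by
    refine monotoneOn_of_hasDerivWithinAt_nonneg (convex_Icc 0 c)
      (f' := fun s => f' s - s * f' c / c) ?_ (fun s hs => ?_) (fun s hs => ?_)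
    · exact (hcont.mono Icc_subset_Ici_self).sub (by fun_prop)
    · rw [interior_Icc] at hs ⊢
      have := (hderiv s hs.1).sub (((hasDerivAt_pow 2 s).mul_const (f' c)).div_const (2 * c))
      exact (this.congr_deriv (by field_simp; ring)).hasDerivWithinAt
    · rw [interior_Icc] at hs
      have h := hconc.smul_le_map_smul self_mem_Ici hf'0 (mem_Ici.2 hc.le)
        (div_nonneg hs.1.le hc.le) ((div_le_one hc).2 hs.2.le)
      rw [smul_eq_mul, div_mul_cancel₀ _ hc.ne'] at h
      have : s * f' c / c = s / c * f' c := by ring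
      linarith
  have hk0 : k 0 = f 0 := by simp [k]
  have hkc : k c = f c - c * f' c / 2 := by simp only [k]; field_simp
  linarith [hk (left_mem_Icc.2 hc.le) (right_mem_Icc.2 hc.le) hc.le]

end ConcaveDeriv

theorem convex_fn_ineq_three_general (σ σ' : ℝ → ℝ)
    (hderiv : ∀ x ∈ Ici (0:ℝ), HasDerivWithinAt σ (σ' x) (Ici 0) x)
    (hconv : ConvexOn ℝ (Ici 0) σ)
    (h0 : σ 0 = 0) (h0' : σ' 0 = 0)
    (hconc : ConcaveOn ℝ (Ici 0) σ') :
    ∀ x y : ℝ, 0 < x → 0 < y →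
      0 ≤ σ (x + y) - σ x - σ y ∧
      σ (x + y) - σ x - σ y ≤ 2 * (x * σ y + y * σ x) / (x + y) := by
  intro x y hx hy
  have hcont : ContinuousOn σ (Ici 0) := fun t ht => (hderiv t ht).continuousWithinAt
  have hderivAt : ∀ t, 0 < t → HasDerivAt σ (σ' t) t := fun t ht =>
    (hderiv t ht.le).hasDerivAt (Ici_mem_nhds ht)
  have hσ'0 : 0 ≤ σ' 0 := h0'.ge
  refine ⟨by linarith [hconv.add_le_map_add h0.le hx.le hy.le], ?_⟩
  have hDx := sub_sub_mul_deriv_le hcont hderivAt hconc hσ'0 hx.le hy.le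
  have hDy := sub_sub_mul_deriv_le hcont hderivAt hconc hσ'0 hy.le hx.le
  have hkx := mul_deriv_le_two_mul_sub hcont hderivAt hconc hσ'0 hx
  have hky := mul_deriv_le_two_mul_sub hcont hderivAt hconc hσ'0 hy
  rw [add_comm y x] at hDy
  rw [h0] at hDx hDy hkx hky
  rw [le_div_iff₀ (add_pos hx hy)]
  linarith [mul_le_mul_of_nonneg_left hDx hy.le, mul_le_mul_of_nonneg_left hDy hx.le,
    mul_le_mul_of_nonneg_left hky hx.le, mul_le_mul_of_nonneg_left hkx hy.le]

/-- For a nonnegative, convex, nondecreasing `C²` function `σ` on `[0,∞)` with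
`σ(0) = σ'(0) = 0` and concave derivative `σ'`, one has
`0 ≤ σ(x+y) − σ(x) − σ(y) ≤ 2 (x σ(y) + y σ(x)) / (x+y)` for all `x, y > 0`. -/
theorem convex_fn_ineq_three (σ σ' : ℝ → ℝ)
    (hC2 : ContDiffOn ℝ 2 σ (Ici 0))
    (hderiv : ∀ x ∈ Ici (0:ℝ), HasDerivWithinAt σ (σ' x) (Ici 0) x)
    (hnonneg : ∀ x ∈ Ici (0:ℝ), 0 ≤ σ x)
    (hconv : ConvexOn ℝ (Ici 0) σ)
    (hmono : MonotoneOn σ (Ici 0))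
    (h0 : σ 0 = 0) (h0' : σ' 0 = 0)
    (hconc : ConcaveOn ℝ (Ici 0) σ') :
    ∀ x y : ℝ, 0 < x → 0 < y →
      0 ≤ σ (x + y) - σ x - σ y ∧
      σ (x + y) - σ x - σ y ≤ 2 * (x * σ y + y * σ x) / (x + y) :=
  convex_fn_ineq_three_general σ σ' hderiv hconv h0 h0' hconc
end

section
/- Let n > 1, let the nonnegative measurable kernel 𝒜 satisfy 𝒜(x,y;z) ≤ A(1+x)(1+y)φ(z) for some A ≥ 0 and nonnegative φ ∈ L¹((0,∞)), and set 𝒜ₙ(x,y;z) := 𝒜(x,y;z) χ_{(0,n)}(x) χ_{(0,n)}(y+z). Define, for ζ ∈ L¹((0,n)), ℬ₁ⁿ(ζ)(x) := ∫₀^{n−x} ∫₀^{n−z} 𝒜ₙ(x+z,y;z) ζ(x+z) ζ(y) dy dz. Then for all ζ, η ∈ L¹((0,n)): ‖ℬ₁ⁿ(ζ) − ℬ₁ⁿ(η)‖_{L¹(0,n)} ≤ 4 A n² ‖φ‖_{L¹(0,n)} (‖ζ‖_{L¹(0,n)} + ‖η‖_{L¹(0,n)}) ‖ζ − η‖_{L¹(0,n)}.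 In particular, ℬ₁ⁿ is locally Lipschitz continuous on L¹((0,n)). -/
open MeasureTheory Set Filter

/-- Truncated kernel `𝒜ₙ(x,y;z) = 𝒜(x,y;z) χ_{(0,n)}(x) χ_{(0,n)}(y+z)`. -/
noncomputable def truncKernel (A : ℝ → ℝ → ℝ → ℝ) (n x y z : ℝ) : ℝ :=
  A x y z * (Ioo (0:ℝ) n).indicator (fun _ => (1:ℝ)) x *
    (Ioo (0:ℝ) n).indicator (fun _ => (1:ℝ)) (y + z)

/-- `ℬ₁ⁿ(ζ)(x) = ∫₀^{n−x} ∫₀^{n−z} 𝒜ₙ(x+z,y;z) ζ(x+z) ζ(y) dy dz`. -/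
noncomputable def trB1 (A : ℝ → ℝ → ℝ → ℝ) (n : ℝ) (f : ℝ → ℝ) (x : ℝ) : ℝ :=
  ∫ z in Ioo (0:ℝ) (n - x), ∫ y in Ioo (0:ℝ) (n - z),
    truncKernel A n (x + z) y z * f (x + z) * f y

/-- `𝒟₁ⁿ(ζ)(x) = −∫₀^{n−x} ∫_z^n 𝒜ₙ(y,x;z) ζ(y) ζ(x) dy dz`. -/
noncomputable def trD1 (A : ℝ → ℝ → ℝ → ℝ) (n : ℝ) (f : ℝ → ℝ) (x : ℝ) : ℝ :=
  - ∫ z in Ioo (0:ℝ) (n - x), ∫ y in Ioo z n, truncKernel A n y x z * f y * f x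

/-- `ℬ₂ⁿ(ζ)(x) = ∫₀^x ∫_z^n 𝒜ₙ(y,x−z;z) ζ(y) ζ(x−z) dy dz`. -/
noncomputable def trB2 (A : ℝ → ℝ → ℝ → ℝ) (n : ℝ) (f : ℝ → ℝ) (x : ℝ) : ℝ :=
  ∫ z in Ioo (0:ℝ) x, ∫ y in Ioo z n, truncKernel A n y (x - z) z * f y * f (x - z)

/-- `𝒟₂ⁿ(ζ)(x) = −∫₀^x ∫₀^{n−z} 𝒜ₙ(x,y;z) ζ(x) ζ(y) dy dz`. -/
noncomputable def trD2 (A : ℝ → ℝ → ℝ → ℝ) (n : ℝ) (f : ℝ → ℝ) (x : ℝ) : ℝ :=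
  - ∫ z in Ioo (0:ℝ) x, ∫ y in Ioo (0:ℝ) (n - z), truncKernel A n x y z * f x * f y

/-- `ζ` is a (classical, `C¹([0,∞); L¹(0,n))`) nonnegative solution of the truncated
CGEDG system on `(0,n)` with initial datum `ζin`. -/
structure IsTruncSol (A : ℝ → ℝ → ℝ → ℝ) (n : ℝ) (ζin : ℝ → ℝ) (ζ : ℝ → ℝ → ℝ) : Prop where
  init : ∀ x, ζ 0 x = ζin x
  nonneg : ∀ t, 0 ≤ t → ∀ x, 0 ≤ ζ t x
  integrable : ∀ t, 0 ≤ t → IntegrableOn (ζ t) (Ioo 0 n)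
  timeDeriv : ∀ t, 0 ≤ t → ∀ x ∈ Ioo (0:ℝ) n,
      HasDerivWithinAt (fun τ => ζ τ x)
        (trB1 A n (ζ t) x + trD1 A n (ζ t) x + trB2 A n (ζ t) x + trD2 A n (ζ t) x)
        (Ici 0) t

/-!
Write `ℬ₁ⁿ(ζ) = B(ζ, ζ)` for the bilinear form
`B(f, g)(x) = ∫₀^{n−x} f(x+z) ∫₀^{n−z} 𝒜ₙ(x+z,y;z) g(y) dy dz`, so that
`ℬ₁ⁿ(ζ) − ℬ₁ⁿ(η) = B(ζ − η, ζ) + B(η, ζ − η)`. On `(0,n)³` the kernel is bounded by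
`ψ(z) = 4An²φ(z)`, hence `|B(f, g)(x)| ≤ ‖g‖₁ ∫₀^{n−x} ψ(z) |f(x+z)| dz`. Extending `ψ` and `f`
by zero to `ℝ`, Fubini and translation invariance of Lebesgue measure bound the `L¹(0,n)` norm of
the right-hand side by `‖ψ‖₁ ‖f‖₁ ‖g‖₁`.
-/

section Correlation

variable {n x : ℝ} {ψ f : ℝ → ℝ}

lemma integrable_mul_comp_add_prod (hψ : Integrable ψ) (hf : Integrable f) :
    Integrable (fun p : ℝ × ℝ => ψ p.2 * f (p.1 + p.2)) (volume.prod volume) := by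
  have hmeas : AEStronglyMeasurable (fun p : ℝ × ℝ => ψ p.2 * f (p.1 + p.2))
      (volume.prod volume) :=
    hψ.aestronglyMeasurable.aemeasurable.comp_snd.aestronglyMeasurable.mul
      (hf.aestronglyMeasurable.comp_quasiMeasurePreserving
        (quasiMeasurePreserving_add volume volume))
  refine (integrable_prod_iff' hmeas).2
    ⟨Eventually.of_forall fun z => (hf.comp_add_right z).const_mul (ψ z), ?_⟩
  simpa only [norm_mul, integral_const_mul, integral_add_right_eq_self fun x => ‖f x‖]
    using hψ.norm.mul_const _

lemma integral_integral_mul_comp_add (hψ : Integrable ψ) (hf : Integrable f) :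
    ∫ x, ∫ z, ψ z * f (x + z) = (∫ z, ψ z) * ∫ u, f u := by
  rw [integral_integral_swap (integrable_mul_comp_add_prod hψ hf)]
  simp only [integral_const_mul, integral_add_right_eq_self f]
  exact integral_mul_const _ _

lemma indicator_mul_indicator_comp_add (hx : x ∈ Ioo 0 n) :
    (fun z => (Ioo 0 n).indicator ψ z * (Ioo 0 n).indicator f (x + z)) =
      (Ioo 0 (n - x)).indicator (fun z => ψ z * f (x + z)) := by
  obtain ⟨hx0, hxn⟩ := hx
  ext z
  simp only [indicator_apply, mem_Ioo]
  split_ifs <;> grind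


lemma ae_integrableOn_mul_comp_add (hψ : IntegrableOn ψ (Ioo 0 n))
    (hf : IntegrableOn f (Ioo 0 n)) :
    ∀ᵐ x ∂volume.restrict (Ioo 0 n),
      IntegrableOn (fun z => ψ z * f (x + z)) (Ioo 0 (n - x)) := by
  have hF := integrable_mul_comp_add_prod ((integrable_indicator_iff measurableSet_Ioo).2 hψ)
    ((integrable_indicator_iff measurableSet_Ioo).2 hf)
  filter_upwards [ae_restrict_mem measurableSet_Ioo, ae_restrict_of_ae hF.prod_right_ae]
    with x hx hFx
  rwa [indicator_mul_indicator_comp_add hx, integrable_indicator_iff measurableSet_Ioo] at hFx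

lemma integrableOn_integral_mul_comp_add (hψ : IntegrableOn ψ (Ioo 0 n))
    (hf : IntegrableOn f (Ioo 0 n)) :
    IntegrableOn (fun x => ∫ z in Ioo 0 (n - x), ψ z * f (x + z)) (Ioo 0 n) := by
  have hF := integrable_mul_comp_add_prod ((integrable_indicator_iff measurableSet_Ioo).2 hψ)
    ((integrable_indicator_iff measurableSet_Ioo).2 hf)
  refine hF.integral_prod_left.integrableOn.congr_fun (fun x hx => ?_) measurableSet_Ioo
  simp only [indicator_mul_indicator_comp_add hx, integral_indicator measurableSet_Ioo]

lemma setIntegral_integral_mul_comp_add_le (hψ : IntegrableOn ψ (Ioo 0 n))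
    (hf : IntegrableOn f (Ioo 0 n)) (hψ0 : ∀ z ∈ Ioo 0 n, 0 ≤ ψ z)
    (hf0 : ∀ u ∈ Ioo 0 n, 0 ≤ f u) :
    ∫ x in Ioo 0 n, ∫ z in Ioo 0 (n - x), ψ z * f (x + z) ≤
      (∫ z in Ioo 0 n, ψ z) * ∫ u in Ioo 0 n, f u := by
  have hψ' := (integrable_indicator_iff measurableSet_Ioo).2 hψ
  have hf' := (integrable_indicator_iff measurableSet_Ioo).2 hf
  have hF0 : ∀ x, 0 ≤ ∫ z, (Ioo 0 n).indicator ψ z * (Ioo 0 n).indicator f (x + z) :=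
    fun x => integral_nonneg fun z =>
      mul_nonneg (indicator_nonneg hψ0 z) (indicator_nonneg hf0 (x + z))
  calc ∫ x in Ioo 0 n, ∫ z in Ioo 0 (n - x), ψ z * f (x + z)
      = ∫ x in Ioo 0 n, ∫ z, (Ioo 0 n).indicator ψ z * (Ioo 0 n).indicator f (x + z) :=
        setIntegral_congr_fun measurableSet_Ioo fun x hx => by
          simp only [indicator_mul_indicator_comp_add hx, integral_indicator measurableSet_Ioo]
    _ ≤ ∫ x, ∫ z, (Ioo 0 n).indicator ψ z * (Ioo 0 n).indicator f (x + z) :=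
        setIntegral_le_integral (integrable_mul_comp_add_prod hψ' hf').integral_prod_left
          (Eventually.of_forall hF0)
    _ = (∫ z in Ioo 0 n, ψ z) * ∫ u in Ioo 0 n, f u := by
        rw [integral_integral_mul_comp_add hψ' hf', integral_indicator measurableSet_Ioo,
          integral_indicator measurableSet_Ioo]

lemma aestronglyMeasurable_comp_add (hf : IntegrableOn f (Ioo 0 n)) (hx : 0 ≤ x) :
    AEStronglyMeasurable (fun z => f (x + z)) (volume.restrict (Ioo 0 (n - x))) := by
  have hf' := ((integrable_indicator_iff measurableSet_Ioo).2 hf).comp_add_left x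
  refine hf'.aestronglyMeasurable.restrict.congr ?_
  filter_upwards [ae_restrict_mem measurableSet_Ioo] with z hz
  exact indicator_of_mem (show x + z ∈ Ioo 0 n from ⟨by linarith [hz.1], by linarith [hz.2]⟩) f

end Correlation

section Kernel

variable {κ : ℝ → ℝ → ℝ → ℝ} {ψ g : ℝ → ℝ} {n u z : ℝ}

lemma norm_kernel_mul_le (hκψ : ∀ u ∈ Ioo 0 n, ∀ y ∈ Ioo 0 n, ∀ z ∈ Ioo 0 n, |κ u y z| ≤ ψ z)
    (hu : u ∈ Ioo 0 n) (hz : z ∈ Ioo 0 n) :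
    ∀ᵐ y ∂volume.restrict (Ioo 0 (n - z)), ‖κ u y z * g y‖ ≤ ψ z * ‖g y‖ := by
  filter_upwards [ae_restrict_mem measurableSet_Ioo] with y hy
  rw [norm_mul, Real.norm_eq_abs (κ u y z)]
  exact mul_le_mul_of_nonneg_right
    (hκψ u hu y ⟨hy.1, by linarith [hy.2, hz.1]⟩ z hz) (norm_nonneg _)

lemma integrableOn_kernel_mul (hκ : Measurable fun p : ℝ × ℝ × ℝ => κ p.1 p.2.1 p.2.2)
    (hκψ : ∀ u ∈ Ioo 0 n, ∀ y ∈ Ioo 0 n, ∀ z ∈ Ioo 0 n, |κ u y z| ≤ ψ z)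
    (hg : IntegrableOn g (Ioo 0 n)) (hu : u ∈ Ioo 0 n) (hz : z ∈ Ioo 0 n) :
    IntegrableOn (fun y => κ u y z * g y) (Ioo 0 (n - z)) := by
  have hg' : IntegrableOn g (Ioo 0 (n - z)) :=
    hg.mono_set (Ioo_subset_Ioo_right (by linarith [hz.1]))
  have hκu : Measurable fun y => κ u y z :=
    hκ.comp (measurable_const.prodMk (measurable_id.prodMk measurable_const))
  exact (hg'.norm.const_mul (ψ z)).mono'
    (hκu.aestronglyMeasurable.mul hg'.aestronglyMeasurable) (norm_kernel_mul_le hκψ hu hz)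

lemma abs_integral_kernel_mul_le
    (hκψ : ∀ u ∈ Ioo 0 n, ∀ y ∈ Ioo 0 n, ∀ z ∈ Ioo 0 n, |κ u y z| ≤ ψ z)
    (hg : IntegrableOn g (Ioo 0 n)) (hu : u ∈ Ioo 0 n) (hz : z ∈ Ioo 0 n) :
    |∫ y in Ioo 0 (n - z), κ u y z * g y| ≤ ψ z * ∫ y in Ioo 0 n, |g y| := by
  have hsub : Ioo 0 (n - z) ⊆ Ioo 0 n := Ioo_subset_Ioo_right (by linarith [hz.1])
  have hψz : 0 ≤ ψ z := (abs_nonneg _).trans (hκψ u hu u hu z hz)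
  calc |∫ y in Ioo 0 (n - z), κ u y z * g y|
      ≤ ∫ y in Ioo 0 (n - z), ψ z * ‖g y‖ :=
        norm_integral_le_of_norm_le ((hg.mono_set hsub).norm.const_mul _)
          (norm_kernel_mul_le hκψ hu hz)
    _ ≤ ψ z * ∫ y in Ioo 0 n, |g y| := by
        rw [integral_const_mul]
        exact mul_le_mul_of_nonneg_left (setIntegral_mono_set hg.norm
          (Eventually.of_forall fun y => norm_nonneg _) hsub.eventuallyLE) hψz

lemma aestronglyMeasurable_integral_kernel_mul
    (hκ : Measurable fun p : ℝ × ℝ × ℝ => κ p.1 p.2.1 p.2.2)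
    (hg : IntegrableOn g (Ioo 0 n)) (x : ℝ) :
    AEStronglyMeasurable (fun z => ∫ y in Ioo 0 (n - z), κ (x + z) y z * g y)
      (volume.restrict (Ioi 0)) := by
  set g' := (Ioo 0 n).indicator g
  have hg' : AEStronglyMeasurable g' volume :=
    ((integrable_indicator_iff measurableSet_Ioo).2 hg).aestronglyMeasurable
  set S : Set (ℝ × ℝ) := {p | p.2 ∈ Ioo 0 (n - p.1)}
  have hS : MeasurableSet S :=
    (measurableSet_lt measurable_const measurable_snd).inter
      (measurableSet_lt measurable_snd (measurable_const.sub measurable_fst))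
  have hκ' : Measurable fun p : ℝ × ℝ => κ (x + p.1) p.2 p.1 :=
    hκ.comp ((measurable_const.add measurable_fst).prodMk (measurable_snd.prodMk measurable_fst))
  have hF : AEStronglyMeasurable (S.indicator fun p => κ (x + p.1) p.2 p.1 * g' p.2)
      ((volume.restrict (Ioi 0)).prod volume) :=
    (hκ'.aestronglyMeasurable.mul hg'.aemeasurable.comp_snd.aestronglyMeasurable).indicator hS
  refine hF.integral_prod_right'.congr ?_
  filter_upwards [ae_restrict_mem measurableSet_Ioi] with z hz
  rw [← integral_indicator measurableSet_Ioo]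
  refine integral_congr_ae (Eventually.of_forall fun y => ?_)
  dsimp only [g']
  by_cases hy : y ∈ Ioo 0 (n - z)
  · have hyn : y ∈ Ioo 0 n := ⟨hy.1, by linarith [hy.2, mem_Ioi.1 hz]⟩
    rw [indicator_of_mem hy, indicator_of_mem (show (z, y) ∈ S from hy),
      indicator_of_mem hyn]
  · rw [indicator_of_notMem hy, indicator_of_notMem (show (z, y) ∉ S from hy)]

end Kernel

noncomputable def gainForm (κ : ℝ → ℝ → ℝ → ℝ) (n : ℝ) (f g : ℝ → ℝ) (x : ℝ) : ℝ :=
  ∫ z in Ioo 0 (n - x), f (x + z) * ∫ y in Ioo 0 (n - z), κ (x + z) y z * g y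

lemma trB1_eq_gainForm (A : ℝ → ℝ → ℝ → ℝ) (n : ℝ) (f : ℝ → ℝ) :
    trB1 A n f = gainForm (truncKernel A n) n f f := by
  ext x
  refine integral_congr_ae (Eventually.of_forall fun z => ?_)
  simp only [← integral_const_mul, mul_left_comm (f (x + z)), mul_assoc]

section GainForm

variable {κ : ℝ → ℝ → ℝ → ℝ} {ψ f g : ℝ → ℝ} {n x : ℝ}

lemma norm_gainForm_integrand_le
    (hκψ : ∀ u ∈ Ioo 0 n, ∀ y ∈ Ioo 0 n, ∀ z ∈ Ioo 0 n, |κ u y z| ≤ ψ z)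
    (hg : IntegrableOn g (Ioo 0 n)) (hx : x ∈ Ioo 0 n) :
    ∀ᵐ z ∂volume.restrict (Ioo 0 (n - x)),
      ‖f (x + z) * ∫ y in Ioo 0 (n - z), κ (x + z) y z * g y‖ ≤
        (∫ y in Ioo 0 n, |g y|) * (ψ z * |f (x + z)|) := by
  filter_upwards [ae_restrict_mem measurableSet_Ioo] with z hz
  have hxz : x + z ∈ Ioo 0 n := ⟨by linarith [hx.1, hz.1], by linarith [hz.2]⟩
  have hzn : z ∈ Ioo 0 n := ⟨hz.1, by linarith [hz.2, hx.1]⟩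
  rw [norm_mul, Real.norm_eq_abs, Real.norm_eq_abs]
  calc |f (x + z)| * |∫ y in Ioo 0 (n - z), κ (x + z) y z * g y|
      ≤ |f (x + z)| * (ψ z * ∫ y in Ioo 0 n, |g y|) :=
        mul_le_mul_of_nonneg_left (abs_integral_kernel_mul_le hκψ hg hxz hzn) (abs_nonneg _)
    _ = (∫ y in Ioo 0 n, |g y|) * (ψ z * |f (x + z)|) := by ring

lemma integrableOn_gainForm_integrand (hκ : Measurable fun p : ℝ × ℝ × ℝ => κ p.1 p.2.1 p.2.2)
    (hκψ : ∀ u ∈ Ioo 0 n, ∀ y ∈ Ioo 0 n, ∀ z ∈ Ioo 0 n, |κ u y z| ≤ ψ z)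
    (hf : IntegrableOn f (Ioo 0 n)) (hg : IntegrableOn g (Ioo 0 n)) (hx : x ∈ Ioo 0 n)
    (hfx : IntegrableOn (fun z => ψ z * |f (x + z)|) (Ioo 0 (n - x))) :
    IntegrableOn (fun z => f (x + z) * ∫ y in Ioo 0 (n - z), κ (x + z) y z * g y)
      (Ioo 0 (n - x)) :=
  (hfx.const_mul _).mono'
    ((aestronglyMeasurable_comp_add hf hx.1.le).mul
      ((aestronglyMeasurable_integral_kernel_mul hκ hg x).mono_measure
        (Measure.restrict_mono Ioo_subset_Ioi_self le_rfl)))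
    (norm_gainForm_integrand_le hκψ hg hx)

lemma abs_gainForm_le (hκψ : ∀ u ∈ Ioo 0 n, ∀ y ∈ Ioo 0 n, ∀ z ∈ Ioo 0 n, |κ u y z| ≤ ψ z)
    (hg : IntegrableOn g (Ioo 0 n)) (hx : x ∈ Ioo 0 n)
    (hfx : IntegrableOn (fun z => ψ z * |f (x + z)|) (Ioo 0 (n - x))) :
    |gainForm κ n f g x| ≤
      (∫ y in Ioo 0 n, |g y|) * ∫ z in Ioo 0 (n - x), ψ z * |f (x + z)| := by
  rw [← integral_const_mul]
  exact norm_integral_le_of_norm_le (hfx.const_mul _) (norm_gainForm_integrand_le hκψ hg hx)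

lemma gainForm_sub_gainForm (hκ : Measurable fun p : ℝ × ℝ × ℝ => κ p.1 p.2.1 p.2.2)
    (hκψ : ∀ u ∈ Ioo 0 n, ∀ y ∈ Ioo 0 n, ∀ z ∈ Ioo 0 n, |κ u y z| ≤ ψ z)
    (hf : IntegrableOn f (Ioo 0 n)) (hg : IntegrableOn g (Ioo 0 n)) (hx : x ∈ Ioo 0 n)
    (hfx : IntegrableOn (fun z => ψ z * |f (x + z)|) (Ioo 0 (n - x)))
    (hgx : IntegrableOn (fun z => ψ z * |g (x + z)|) (Ioo 0 (n - x))) :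
    gainForm κ n f f x - gainForm κ n g g x =
      gainForm κ n (f - g) f x + gainForm κ n g (f - g) x := by
  have hff := integrableOn_gainForm_integrand hκ hκψ hf hf hx hfx
  have hgf := integrableOn_gainForm_integrand hκ hκψ hg hf hx hgx
  have hgg := integrableOn_gainForm_integrand hκ hκψ hg hg hx hgx
  have hleft : gainForm κ n (f - g) f x = gainForm κ n f f x - gainForm κ n g f x := by
    rw [gainForm, gainForm, gainForm, ← integral_sub hff hgf]
    simp only [Pi.sub_apply, sub_mul]
  have hright : gainForm κ n g (f - g) x = gainForm κ n g f x - gainForm κ n g g x := by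
    rw [gainForm, gainForm, gainForm, ← integral_sub hgf hgg]
    refine setIntegral_congr_fun measurableSet_Ioo fun z hz => ?_
    have hxz : x + z ∈ Ioo 0 n := ⟨by linarith [hx.1, hz.1], by linarith [hz.2]⟩
    have hzn : z ∈ Ioo 0 n := ⟨hz.1, by linarith [hz.2, hx.1]⟩
    rw [← mul_sub, ← integral_sub (integrableOn_kernel_mul hκ hκψ hf hxz hzn)
      (integrableOn_kernel_mul hκ hκψ hg hxz hzn)]
    simp only [Pi.sub_apply, mul_sub]
  rw [hleft, hright]
  ring

end GainForm

theorem integral_abs_gainForm_sub_le {κ : ℝ → ℝ → ℝ → ℝ} {ψ f g : ℝ → ℝ} {n : ℝ}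
    (hκ : Measurable fun p : ℝ × ℝ × ℝ => κ p.1 p.2.1 p.2.2)
    (hκψ : ∀ u ∈ Ioo 0 n, ∀ y ∈ Ioo 0 n, ∀ z ∈ Ioo 0 n, |κ u y z| ≤ ψ z)
    (hψ : IntegrableOn ψ (Ioo 0 n)) (hf : IntegrableOn f (Ioo 0 n))
    (hg : IntegrableOn g (Ioo 0 n)) :
    ∫ x in Ioo 0 n, |gainForm κ n f f x - gainForm κ n g g x| ≤
      (∫ z in Ioo 0 n, ψ z) * ((∫ x in Ioo 0 n, |f x|) + ∫ x in Ioo 0 n, |g x|) *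
        ∫ x in Ioo 0 n, |f x - g x| := by
  have hψ0 : ∀ z ∈ Ioo 0 n, 0 ≤ ψ z := fun z hz => (abs_nonneg _).trans (hκψ z hz z hz z hz)
  have hd : IntegrableOn (f - g) (Ioo 0 n) := hf.sub hg
  set N : (ℝ → ℝ) → ℝ := fun h => ∫ x in Ioo 0 n, |h x|
  set C : (ℝ → ℝ) → ℝ → ℝ := fun h x => ∫ z in Ioo 0 (n - x), ψ z * |h (x + z)|
  have hN0 : ∀ h, 0 ≤ N h := fun h => setIntegral_nonneg measurableSet_Ioo fun _ _ => abs_nonneg _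
  have hCint : ∀ h, IntegrableOn h (Ioo 0 n) → IntegrableOn (C h) (Ioo 0 n) :=
    fun h hh => integrableOn_integral_mul_comp_add hψ hh.abs
  have hCle : ∀ h, IntegrableOn h (Ioo 0 n) →
      ∫ x in Ioo 0 n, C h x ≤ (∫ z in Ioo 0 n, ψ z) * N h := fun h hh =>
    setIntegral_integral_mul_comp_add_le hψ hh.abs hψ0 fun _ _ => abs_nonneg _
  have hpointwise : ∀ᵐ x ∂volume.restrict (Ioo 0 n),
      |gainForm κ n f f x - gainForm κ n g g x| ≤ N f * C (f - g) x + N (f - g) * C g x := by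
    filter_upwards [ae_restrict_mem measurableSet_Ioo, ae_integrableOn_mul_comp_add hψ hf.abs,
      ae_integrableOn_mul_comp_add hψ hg.abs, ae_integrableOn_mul_comp_add hψ hd.abs]
      with x hx hfx hgx hdx
    rw [gainForm_sub_gainForm hκ hκψ hf hg hx hfx hgx]
    exact (abs_add_le _ _).trans
      (add_le_add (abs_gainForm_le hκψ hf hx hdx) (abs_gainForm_le hκψ hd hx hgx))
  calc ∫ x in Ioo 0 n, |gainForm κ n f f x - gainForm κ n g g x|
      ≤ ∫ x in Ioo 0 n, (N f * C (f - g) x + N (f - g) * C g x) :=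
        integral_mono_of_nonneg (Eventually.of_forall fun _ => abs_nonneg _)
          (((hCint _ hd).const_mul _).add ((hCint _ hg).const_mul _)) hpointwise
    _ = N f * (∫ x in Ioo 0 n, C (f - g) x) + N (f - g) * ∫ x in Ioo 0 n, C g x := by
        rw [integral_add ((hCint _ hd).const_mul _) ((hCint _ hg).const_mul _),
          integral_const_mul, integral_const_mul]
    _ ≤ N f * ((∫ z in Ioo 0 n, ψ z) * N (f - g)) +
          N (f - g) * ((∫ z in Ioo 0 n, ψ z) * N g) :=
        add_le_add (mul_le_mul_of_nonneg_left (hCle _ hd) (hN0 _))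
          (mul_le_mul_of_nonneg_left (hCle _ hg) (hN0 _))
    _ = (∫ z in Ioo 0 n, ψ z) * (N f + N g) * N (f - g) := by ring

section TruncKernel

variable {A : ℝ → ℝ → ℝ → ℝ} {φ : ℝ → ℝ} {c n : ℝ}

lemma measurable_truncKernel (hA : Measurable fun p : ℝ × ℝ × ℝ => A p.1 p.2.1 p.2.2) (n : ℝ) :
    Measurable fun p : ℝ × ℝ × ℝ => truncKernel A n p.1 p.2.1 p.2.2 := by
  have hχ : Measurable ((Ioo (0:ℝ) n).indicator fun _ => (1:ℝ)) :=
    measurable_const.indicator measurableSet_Ioo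
  exact (hA.mul (hχ.comp measurable_fst)).mul
    (hχ.comp (measurable_snd.fst.add measurable_snd.snd))

lemma abs_truncKernel_le (hn : 1 < n) (hA0 : ∀ x y z, 0 ≤ A x y z)
    (hbound : ∀ x y z, 0 < x → 0 < y → 0 < z → A x y z ≤ c * (1 + x) * (1 + y) * φ z) :
    ∀ u ∈ Ioo 0 n, ∀ y ∈ Ioo 0 n, ∀ z ∈ Ioo 0 n,
      |truncKernel A n u y z| ≤ 4 * c * n ^ 2 * φ z := by
  intro u hu y hy z hz
  have hcφ : 0 ≤ c * φ z := by nlinarith [hA0 1 1 z, hbound 1 1 z one_pos one_pos hz.1]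
  have hA : A u y z ≤ 4 * c * n ^ 2 * φ z := by
    have h1 : (1 + u) * (1 + y) ≤ 4 * n ^ 2 := by nlinarith [hu.1, hu.2, hy.1, hy.2]
    nlinarith [hbound u y z hu.1 hy.1 hz.1, mul_le_mul_of_nonneg_left h1 hcφ]
  by_cases hyz : y + z ∈ Ioo 0 n
  · simpa [truncKernel, hu, hyz, abs_of_nonneg (hA0 u y z)] using hA
  · simpa [truncKernel, hyz] using (hA0 u y z).trans hA

end TruncKernel

theorem truncated_B1_lipschitz_general
    (A : ℝ → ℝ → ℝ → ℝ) (φ : ℝ → ℝ) (c n : ℝ) (hn : 1 < n)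
    (hA_meas : Measurable (fun p : ℝ × ℝ × ℝ => A p.1 p.2.1 p.2.2))
    (hA_nonneg : ∀ x y z, 0 ≤ A x y z)
    (hφ_int : IntegrableOn φ (Ioi 0))
    (hbound : ∀ x y z, 0 < x → 0 < y → 0 < z →
      A x y z ≤ c * (1 + x) * (1 + y) * φ z) :
    ∀ ζ η : ℝ → ℝ, IntegrableOn ζ (Ioo 0 n) → IntegrableOn η (Ioo 0 n) →
      ∫ x in Ioo (0:ℝ) n, |trB1 A n ζ x - trB1 A n η x| ≤
        4 * c * n ^ 2 * (∫ z in Ioo (0:ℝ) n, φ z) *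
          ((∫ x in Ioo (0:ℝ) n, |ζ x|) + ∫ x in Ioo (0:ℝ) n, |η x|) *
          ∫ x in Ioo (0:ℝ) n, |ζ x - η x| := by
  intro ζ η hζ hη
  have hψ : IntegrableOn (fun z => 4 * c * n ^ 2 * φ z) (Ioo 0 n) :=
    (hφ_int.mono_set Ioo_subset_Ioi_self).const_mul _
  have h := integral_abs_gainForm_sub_le (measurable_truncKernel hA_meas n)
    (abs_truncKernel_le hn hA_nonneg hbound) hψ hζ hη
  rwa [integral_const_mul, ← trB1_eq_gainForm, ← trB1_eq_gainForm] at h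

/-- **Local Lipschitz estimate for the truncated gain operator `ℬ₁ⁿ`.**
For `ζ, η ∈ L¹(0,n)`,
`‖ℬ₁ⁿ(ζ) − ℬ₁ⁿ(η)‖_{L¹(0,n)} ≤ 4An²‖φ‖_{L¹(0,n)} (‖ζ‖ + ‖η‖) ‖ζ − η‖`;
in particular `ℬ₁ⁿ` is locally Lipschitz on `L¹(0,n)`. -/
theorem truncated_B1_lipschitz
    (A : ℝ → ℝ → ℝ → ℝ) (φ : ℝ → ℝ) (c n : ℝ) (hn : 1 < n) (hc : 0 ≤ c)
    (hA_meas : Measurable (fun p : ℝ × ℝ × ℝ => A p.1 p.2.1 p.2.2))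
    (hA_nonneg : ∀ x y z, 0 ≤ A x y z)
    (hφ_nonneg : ∀ x, 0 ≤ φ x)
    (hφ_int : IntegrableOn φ (Ioi 0))
    (hbound : ∀ x y z, 0 < x → 0 < y → 0 < z →
      A x y z ≤ c * (1 + x) * (1 + y) * φ z) :
    ∀ ζ η : ℝ → ℝ, IntegrableOn ζ (Ioo 0 n) → IntegrableOn η (Ioo 0 n) →
      ∫ x in Ioo (0:ℝ) n, |trB1 A n ζ x - trB1 A n η x| ≤
        4 * c * n ^ 2 * (∫ z in Ioo (0:ℝ) n, φ z) *
          ((∫ x in Ioo (0:ℝ) n, |ζ x|) + ∫ x in Ioo (0:ℝ) n, |η x|) *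
          ∫ x in Ioo (0:ℝ) n, |ζ x - η x| :=
  truncated_B1_lipschitz_general A φ c n hn hA_meas hA_nonneg hφ_int hbound
end

section
/- Let ζ be a weak solution of the continuous generalized exchange-driven growth equation with initial datum ζ^in ∈ L¹((0,∞),(1+x)dx), where the kernel 𝒜 satisfies 𝒜(x,y;z)=0 for z>x and the sum-type bound 𝒜(x,y;z) ≤ A φ(z) for x+y<1 and 𝒜(x,y;z) ≤ A(x+y)φ(z) for x+y>1, with φ a nonnegative function in L¹((0,∞),(1+x)dx). Then, writing ℬ(x,y;z,ζ(s)) := 𝒜(x,y;z) ζ(s,x) ζ(s,y), for every p > 0 and t ≥ 0: ∫_p^∞ [ζ(t,x) − ζ^in(x)] dx = ∫₀^t ( ∫₀^p ∫_{p−z}^p ∫_z^∞ − ∫_p^∞ ∫_p^∞ ∫_z^∞ − ∫₀^p ∫₀^∞ ∫_p^{p+z} + ∫_p^∞ ∫₀^∞ ∫_{p+z}^∞ ) ℬ(x,y;z,ζ(s)) dx dy dz ds; and moreover lim_{p→∞} p ∫_p^∞ [ζ(t,x) − ζ^in(x)] dx = 0. -/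
open MeasureTheory Set Filter

/-!
Testing the weak formulation against `ω = 𝟙_(p,∞)` produces `∫_p^∞ (ζ(t) - ζin)`. For almost
every `(x, y, z)` with `0 < z ≤ x`, the weight `ω(y+z) + ω(x-z) - ω(x) - ω(y)` equals
`𝟙_R₁ - 𝟙_R₂ - 𝟙_R₃ + 𝟙_R₄` for the four regions of the statement, so at each time the
right-hand side splits into the four integrals. The sum-type bound
`𝒜(x,y;z) ≤ c φ(z) (1+x) (1+y)` makes `ℬ` integrable on `(0,∞)³`, which justifies every use of
Fubini, and bounds each term by `c ‖φ‖₁ (∫ (1+x) ζ(s))²` uniformly on `[0,t]`. Each term is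
measurable in time because it integrates a fixed kernel against `ν_s ⊗ ν_s`, where
`ν_s = ζ(s,x) dx` depends measurably on `s` by weak continuity.

The vanishing of the tail uses only `(1+x) (ζ(t) - ζin) ∈ L¹`:
`p |∫_p^∞ f| ≤ ∫_p^∞ (1+x) |f| → 0`.
-/

local notation "μ₊" => volume.restrict (Ioi (0:ℝ))
-- Points of `(0,∞)³` are written `((x, y), z)`.
local notation "μ₃" => Measure.prod (Measure.prod μ₊ μ₊) μ₊

section Fubini
variable {α β γ E : Type*} [MeasurableSpace α] [MeasurableSpace β] [MeasurableSpace γ]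
  [NormedAddCommGroup E] [NormedSpace ℝ E] {μ : Measure α} {ν : Measure β} {ρ : Measure γ}
  [SFinite μ] [SFinite ν] [SFinite ρ]

theorem integral_prod_prod {f : (α × β) × γ → E} (hf : Integrable f ((μ.prod ν).prod ρ)) :
    ∫ q, f q ∂(μ.prod ν).prod ρ = ∫ x, ∫ y, ∫ z, f ((x, y), z) ∂ρ ∂ν ∂μ := by
  rw [integral_prod f hf, integral_prod _ hf.integral_prod_left]

theorem integral_prod_prod_rev {f : (α × β) × γ → E} (hf : Integrable f ((μ.prod ν).prod ρ)) :
    ∫ q, f q ∂(μ.prod ν).prod ρ = ∫ z, ∫ y, ∫ x, f ((x, y), z) ∂μ ∂ν ∂ρ := by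
  let e : γ × β × α ≃ᵐ (α × β) × γ :=
    (MeasurableEquiv.prodCongr (MeasurableEquiv.refl γ) MeasurableEquiv.prodComm).trans
      MeasurableEquiv.prodComm
  have he : MeasurePreserving e (ρ.prod (ν.prod μ)) ((μ.prod ν).prod ρ) :=
    ((MeasurePreserving.id ρ).prod Measure.measurePreserving_swap).trans
      Measure.measurePreserving_swap
  have hfe := (he.integrable_comp_emb e.measurableEmbedding).2 hf
  rw [← he.integral_comp', ← Function.comp_def, integral_prod _ hfe]
  refine integral_congr_ae ?_
  filter_upwards [hfe.prod_right_ae] with z hz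
  exact integral_prod _ hz

end Fubini

theorem integral_indicator_one_mul {α : Type*} [MeasurableSpace α] {μ : Measure α} {S : Set α}
    (hS : MeasurableSet S) (u : α → ℝ) :
    ∫ x, S.indicator 1 x * u x ∂μ = ∫ x in S, u x ∂μ := by
  rw [← integral_indicator hS]
  congr 1 with x
  by_cases hx : x ∈ S <;> simp [hx]

open ProbabilityTheory in
theorem Measurable.lintegral_prod_self {α β : Type*} [MeasurableSpace α]
    [MeasurableSpace β] {κ : α → Measure β} (hκ : Measurable κ) {C : ENNReal} (hC : C ≠ ⊤)
    (hκC : ∀ a, κ a univ ≤ C) {K : β × β → ENNReal} (hK : Measurable K) :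
    Measurable fun a => ∫⁻ w, K w ∂(κ a).prod (κ a) := by
  let k : Kernel α β := ⟨κ, hκ⟩
  have : IsFiniteKernel k := ⟨⟨C, hC.lt_top, hκC⟩⟩
  simpa [k, Kernel.prod_apply] using hK.lintegral_kernel (κ := k ×ₖ k)

theorem integral_mul_mul_eq_toReal_lintegral_withDensity {α β : Type*} [MeasurableSpace α]
    [MeasurableSpace β] {μ : Measure α} {ρ : Measure β} [SFinite μ] [SFinite ρ]
    {a : (α × α) × β → ℝ} (ha : Measurable a) (ha0 : ∀ q, 0 ≤ a q) {u : α → ℝ}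
    (hu : AEMeasurable u μ) (hu0 : ∀ x, 0 ≤ u x) :
    ∫ q, a q * u q.1.1 * u q.1.2 ∂(μ.prod μ).prod ρ =
      (∫⁻ w, ∫⁻ z, ENNReal.ofReal (a (w, z)) ∂ρ ∂((μ.withDensity fun x => ENNReal.ofReal (u x)).prod
        (μ.withDensity fun x => ENNReal.ofReal (u x)))).toReal := by
  have hd : AEMeasurable (fun x => ENNReal.ofReal (u x)) μ := hu.ennreal_ofReal
  have hdd : AEMeasurable (fun w : α × α => ENNReal.ofReal (u w.1) * ENNReal.ofReal (u w.2))
      (μ.prod μ) := hd.comp_fst.mul hd.comp_snd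
  have hK : Measurable fun w => ∫⁻ z, ENNReal.ofReal (a (w, z)) ∂ρ :=
    ha.ennreal_ofReal.lintegral_prod_right'
  have hF : AEMeasurable (fun q => a q * u q.1.1 * u q.1.2) ((μ.prod μ).prod ρ) :=
    (ha.aemeasurable.mul hu.comp_fst.comp_fst).mul hu.comp_snd.comp_fst
  rw [integral_eq_lintegral_of_nonneg_ae
      (ae_of_all _ fun q => mul_nonneg (mul_nonneg (ha0 q) (hu0 _)) (hu0 _))
      hF.aestronglyMeasurable,
    prod_withDensity₀ hd hd, lintegral_withDensity_eq_lintegral_mul₀ hdd hK.aemeasurable,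
    lintegral_prod _ hF.ennreal_ofReal]
  congr 1
  refine lintegral_congr fun w => ?_
  rw [Pi.mul_apply, ← lintegral_const_mul' _ _ (by finiteness)]
  refine lintegral_congr fun z => ?_
  rw [← ENNReal.ofReal_mul (hu0 _), ← ENNReal.ofReal_mul (mul_nonneg (hu0 _) (hu0 _))]
  ring_nf

theorem setIntegral_eq_integral_indicator_of_subset_Ioi {g : ℝ → ℝ} {V : Set ℝ}
    (hV : MeasurableSet V) (hV0 : V ⊆ Ioi 0) :
    ∫ x in V, g x = ∫ x, V.indicator g x ∂μ₊ := by
  rw [integral_indicator hV, Measure.restrict_restrict hV, inter_eq_left.2 hV0]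

theorem aestronglyMeasurable_of_integrableOn_one_add_mul {u : ℝ → ℝ}
    (hu : IntegrableOn (fun x => (1 + x) * u x) (Ioi 0)) : AEStronglyMeasurable u μ₊ := by
  refine (hu.aestronglyMeasurable.mul
    (by fun_prop : Measurable fun x : ℝ => (1 + x)⁻¹).aestronglyMeasurable).congr ?_
  filter_upwards [ae_restrict_mem measurableSet_Ioi] with x hx
  have : (1 + x) ≠ 0 := by simp only [mem_Ioi] at hx; positivity
  simp [field]

theorem integrableOn_of_integrableOn_one_add_mul {u : ℝ → ℝ}
    (hu : IntegrableOn (fun x => (1 + x) * u x) (Ioi 0)) : IntegrableOn u (Ioi 0) := by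
  refine hu.norm.mono' (aestronglyMeasurable_of_integrableOn_one_add_mul hu) ?_
  filter_upwards [ae_restrict_mem measurableSet_Ioi] with x hx
  simp only [mem_Ioi] at hx
  rw [norm_mul, Real.norm_of_nonneg (by linarith : (0:ℝ) ≤ 1 + x)]
  nlinarith [norm_nonneg (u x)]

theorem withDensity_ofReal_apply {u : ℝ → ℝ} (hu0 : ∀ x, 0 ≤ u x)
    (hu : IntegrableOn u (Ioi 0)) {S : Set ℝ} (hS : MeasurableSet S) :
    (μ₊.withDensity fun x => ENNReal.ofReal (u x)) S =
      ENNReal.ofReal (∫ x in Ioi 0, S.indicator 1 x * u x) := by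
  rw [withDensity_apply _ hS, integral_indicator_one_mul hS]
  exact (ofReal_integral_eq_lintegral_ofReal (Integrable.restrict hu) (ae_of_all _ hu0)).symm

def iteratedRegion (S : Set ℝ) (T U : ℝ → Set ℝ) : Set ((ℝ × ℝ) × ℝ) :=
  {q | q.2 ∈ S ∧ q.1.2 ∈ T q.2 ∧ q.1.1 ∈ U q.2}

theorem integral_indicator_iteratedRegion {f : (ℝ × ℝ) × ℝ → ℝ} (hf : Integrable f μ₃)
    {S : Set ℝ} {T U : ℝ → Set ℝ} (hS : MeasurableSet S) (hT : ∀ z, MeasurableSet (T z))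
    (hU : ∀ z, MeasurableSet (U z)) (hR : MeasurableSet (iteratedRegion S T U))
    (hS0 : S ⊆ Ioi 0) (hT0 : ∀ z ∈ S, T z ⊆ Ioi 0) (hU0 : ∀ z ∈ S, U z ⊆ Ioi 0) :
    ∫ q, (iteratedRegion S T U).indicator f q ∂μ₃ =
      ∫ z in S, ∫ y in T z, ∫ x in U z, f ((x, y), z) := by
  rw [integral_prod_prod_rev (hf.indicator hR),
    setIntegral_eq_integral_indicator_of_subset_Ioi hS hS0]
  refine integral_congr_ae (ae_of_all _ fun z => ?_)
  by_cases hz : z ∈ S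
  · rw [indicator_of_mem hz, setIntegral_eq_integral_indicator_of_subset_Ioi (hT z) (hT0 z hz)]
    refine integral_congr_ae (ae_of_all _ fun y => ?_)
    by_cases hy : y ∈ T z
    · rw [indicator_of_mem hy, setIntegral_eq_integral_indicator_of_subset_Ioi (hU z) (hU0 z hz)]
      refine integral_congr_ae (ae_of_all _ fun x => ?_)
      by_cases hx : x ∈ U z <;> simp [iteratedRegion, hz, hy, hx]
    · simp [iteratedRegion, hy]
  · simp [iteratedRegion, hz]

theorem integral_Ioc_eq_integral_indicator {h : (ℝ × ℝ) × ℝ → ℝ} (hh : Integrable h μ₃) :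
    ∫ x in Ioi 0, ∫ y in Ioi 0, ∫ z in Ioc 0 x, h ((x, y), z) =
      ∫ q, {q : (ℝ × ℝ) × ℝ | q.2 ≤ q.1.1}.indicator h q ∂μ₃ := by
  have hm : MeasurableSet {q : (ℝ × ℝ) × ℝ | q.2 ≤ q.1.1} :=
    measurableSet_le measurable_snd (by fun_prop)
  rw [integral_prod_prod (hh.indicator hm)]
  refine integral_congr_ae (ae_of_all _ fun x => integral_congr_ae (ae_of_all _ fun y => ?_))
  simp only
  rw [← Ioi_inter_Iic, inter_comm, ← Measure.restrict_restrict measurableSet_Iic,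
    ← integral_indicator measurableSet_Iic]
  rfl

theorem le_of_sum_type_bound {A : ℝ → ℝ → ℝ → ℝ} {φ : ℝ → ℝ} {c : ℝ} (hc : 0 ≤ c)
    (hφ0 : ∀ x, 0 ≤ φ x)
    (hsum₁ : ∀ x y z, 0 < x → 0 < y → 0 < z → x + y < 1 → A x y z ≤ c * φ z)
    (hsum₂ : ∀ x y z, 0 < x → 0 < y → 0 < z → 1 < x + y → A x y z ≤ c * (x + y) * φ z)
    {x y z : ℝ} (hx : 0 < x) (hy : 0 < y) (hz : 0 < z) (hxy : x + y ≠ 1) :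
    A x y z ≤ c * φ z * ((1 + x) * (1 + y)) := by
  have hcφ : 0 ≤ c * φ z := mul_nonneg hc (hφ0 z)
  rcases hxy.lt_or_gt with h | h
  · calc A x y z ≤ c * φ z * 1 := by simpa using hsum₁ x y z hx hy hz h
      _ ≤ c * φ z * ((1 + x) * (1 + y)) := by gcongr; nlinarith
  · calc A x y z ≤ c * φ z * (x + y) := by linarith [hsum₂ x y z hx hy hz h]
      _ ≤ c * φ z * ((1 + x) * (1 + y)) := by gcongr; nlinarith

theorem ae_le_of_sum_type_bound {A : ℝ → ℝ → ℝ → ℝ} {φ : ℝ → ℝ} {c : ℝ} (hc : 0 ≤ c)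
    (hφ0 : ∀ x, 0 ≤ φ x)
    (hsum₁ : ∀ x y z, 0 < x → 0 < y → 0 < z → x + y < 1 → A x y z ≤ c * φ z)
    (hsum₂ : ∀ x y z, 0 < x → 0 < y → 0 < z → 1 < x + y → A x y z ≤ c * (x + y) * φ z) :
    ∀ᵐ q ∂μ₃, A q.1.1 q.1.2 q.2 ≤ c * φ q.2 * ((1 + q.1.1) * (1 + q.1.2)) := by
  have hxy : ∀ᵐ w ∂μ₊.prod μ₊, 0 < w.1 ∧ 0 < w.2 ∧ w.1 + w.2 ≠ 1 := by
    refine (Measure.ae_prod_iff_ae_ae (by measurability)).2 ?_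
    filter_upwards [ae_restrict_mem measurableSet_Ioi] with x hx
    filter_upwards [ae_restrict_mem measurableSet_Ioi,
      ae_restrict_of_ae (Measure.ae_ne volume (1 - x))] with y hy hy1
    exact ⟨hx, hy, fun h => hy1 (by linarith)⟩
  have hpos : ∀ᵐ q ∂μ₃, (0 < q.1.1 ∧ 0 < q.1.2 ∧ q.1.1 + q.1.2 ≠ 1) ∧ 0 < q.2 :=
    (Measure.ae_prod_iff_ae_ae (by measurability)).2 (hxy.mono fun w hw =>
      (ae_restrict_mem measurableSet_Ioi).mono fun z hz => ⟨hw, hz⟩)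
  filter_upwards [hpos] with q ⟨⟨hx, hy, hxy⟩, hz⟩
  exact le_of_sum_type_bound hc hφ0 hsum₁ hsum₂ hx hy hz hxy

noncomputable def kernelBUncurried (A : ℝ → ℝ → ℝ → ℝ) (ζ : ℝ → ℝ → ℝ) (s : ℝ)
    (q : (ℝ × ℝ) × ℝ) : ℝ :=
  kernelB A ζ s q.1.1 q.1.2 q.2

section Domination

variable {A : ℝ → ℝ → ℝ → ℝ} {ψ : ℝ → ℝ} {ζ : ℝ → ℝ → ℝ} {s : ℝ}

theorem ae_norm_kernelB_le (hA0 : ∀ x y z, 0 ≤ A x y z)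
    (hAψ : ∀ᵐ q ∂μ₃, A q.1.1 q.1.2 q.2 ≤ ψ q.2 * ((1 + q.1.1) * (1 + q.1.2)))
    (hζ0 : ∀ x, 0 ≤ ζ s x) :
    ∀ᵐ q ∂μ₃, ‖kernelBUncurried A ζ s q‖ ≤
      (1 + q.1.1) * ζ s q.1.1 * ((1 + q.1.2) * ζ s q.1.2) * ψ q.2 := by
  filter_upwards [hAψ] with q hq
  have hB : 0 ≤ kernelBUncurried A ζ s q :=
    mul_nonneg (mul_nonneg (hA0 _ _ _) (hζ0 _)) (hζ0 _)
  rw [Real.norm_of_nonneg hB, kernelBUncurried, kernelB]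
  calc A q.1.1 q.1.2 q.2 * ζ s q.1.1 * ζ s q.1.2
      ≤ ψ q.2 * ((1 + q.1.1) * (1 + q.1.2)) * ζ s q.1.1 * ζ s q.1.2 := by
        gcongr <;> exact hζ0 _
    _ = (1 + q.1.1) * ζ s q.1.1 * ((1 + q.1.2) * ζ s q.1.2) * ψ q.2 := by ring

theorem integrable_kernelB (hA : Measurable (fun p : ℝ × ℝ × ℝ => A p.1 p.2.1 p.2.2))
    (hA0 : ∀ x y z, 0 ≤ A x y z) (hψ : IntegrableOn ψ (Ioi 0))
    (hAψ : ∀ᵐ q ∂μ₃, A q.1.1 q.1.2 q.2 ≤ ψ q.2 * ((1 + q.1.1) * (1 + q.1.2)))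
    (hζ0 : ∀ x, 0 ≤ ζ s x) (hζ : IntegrableOn (fun x => (1 + x) * ζ s x) (Ioi 0)) :
    Integrable (kernelBUncurried A ζ s) μ₃ := by
  have hm := aestronglyMeasurable_of_integrableOn_one_add_mul hζ
  refine Integrable.mono' ((hζ.mul_prod hζ).mul_prod hψ) ?_ (ae_norm_kernelB_le hA0 hAψ hζ0)
  exact (((hA.comp MeasurableEquiv.prodAssoc.measurable).aestronglyMeasurable.mul
    hm.comp_fst.comp_fst).mul hm.comp_snd.comp_fst)

theorem norm_integral_indicator_kernelB_le (hA0 : ∀ x y z, 0 ≤ A x y z)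
    (hψ : IntegrableOn ψ (Ioi 0))
    (hAψ : ∀ᵐ q ∂μ₃, A q.1.1 q.1.2 q.2 ≤ ψ q.2 * ((1 + q.1.1) * (1 + q.1.2)))
    (hζ0 : ∀ x, 0 ≤ ζ s x) (hζ : IntegrableOn (fun x => (1 + x) * ζ s x) (Ioi 0))
    (R : Set ((ℝ × ℝ) × ℝ)) :
    ‖∫ q, R.indicator (kernelBUncurried A ζ s) q ∂μ₃‖ ≤
      (∫ x in Ioi 0, (1 + x) * ζ s x) ^ 2 * ∫ z in Ioi 0, ψ z := by
  calc ‖∫ q, R.indicator (kernelBUncurried A ζ s) q ∂μ₃‖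
      ≤ ∫ q, (1 + q.1.1) * ζ s q.1.1 * ((1 + q.1.2) * ζ s q.1.2) * ψ q.2 ∂μ₃ := by
        refine norm_integral_le_of_norm_le ((hζ.mul_prod hζ).mul_prod hψ) ?_
        filter_upwards [ae_norm_kernelB_le hA0 hAψ hζ0] with q hq
        exact (norm_indicator_le_norm_self _ _).trans hq
    _ = (∫ w, (1 + w.1) * ζ s w.1 * ((1 + w.2) * ζ s w.2) ∂μ₊.prod μ₊) * ∫ z in Ioi 0, ψ z :=
        integral_prod_mul (fun w : ℝ × ℝ => (1 + w.1) * ζ s w.1 * ((1 + w.2) * ζ s w.2)) ψ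
    _ = (∫ x in Ioi 0, (1 + x) * ζ s x) ^ 2 * ∫ z in Ioi 0, ψ z := by
        rw [integral_prod_mul (fun x => (1 + x) * ζ s x) (fun x => (1 + x) * ζ s x), sq]

theorem integral_indicator_kernelB_eq (hA : Measurable (fun p : ℝ × ℝ × ℝ => A p.1 p.2.1 p.2.2))
    (hA0 : ∀ x y z, 0 ≤ A x y z) {R : Set ((ℝ × ℝ) × ℝ)} (hR : MeasurableSet R)
    (hζ0 : ∀ x, 0 ≤ ζ s x) (hζ : AEStronglyMeasurable (ζ s) μ₊) :
    ∫ q, R.indicator (kernelBUncurried A ζ s) q ∂μ₃ =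
      (∫⁻ w, ∫⁻ z, ENNReal.ofReal (R.indicator (fun q => A q.1.1 q.1.2 q.2) (w, z)) ∂μ₊
        ∂(μ₊.withDensity fun x => ENNReal.ofReal (ζ s x)).prod
          (μ₊.withDensity fun x => ENNReal.ofReal (ζ s x))).toReal := by
  have ha : Measurable (R.indicator fun q : (ℝ × ℝ) × ℝ => A q.1.1 q.1.2 q.2) :=
    (hA.comp MeasurableEquiv.prodAssoc.measurable).indicator hR
  rw [← integral_mul_mul_eq_toReal_lintegral_withDensity (ρ := μ₊) ha (fun q => ?_)
    hζ.aemeasurable hζ0]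
  · congr 1 with q
    by_cases hq : q ∈ R <;> simp [hq, kernelBUncurried, kernelB]
  · by_cases hq : q ∈ R <;> simp [hq, hA0]

end Domination

def tailRegion (p : ℝ) : Fin 4 → Set ((ℝ × ℝ) × ℝ)
  | 0 => iteratedRegion (Ioo 0 p) (fun z => Ioo (p - z) p) fun z => Ioi z
  | 1 => iteratedRegion (Ioi p) (fun _ => Ioi p) fun z => Ioi z
  | 2 => iteratedRegion (Ioo 0 p) (fun _ => Ioi 0) fun z => Ioo p (p + z)
  | 3 => iteratedRegion (Ioi p) (fun _ => Ioi 0) fun z => Ioi (p + z)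

theorem measurableSet_tailRegion (p : ℝ) (i : Fin 4) : MeasurableSet (tailRegion p i) := by
  fin_cases i <;> (simp only [tailRegion, iteratedRegion]; measurability)

noncomputable def tailWeight (p : ℝ) (q : (ℝ × ℝ) × ℝ) : ℝ :=
  (Ioi p).indicator 1 (q.1.2 + q.2) + (Ioi p).indicator 1 (q.1.1 - q.2) -
    (Ioi p).indicator 1 q.1.1 - (Ioi p).indicator 1 q.1.2

theorem tailWeight_indicator_eq {p : ℝ} (hp : 0 < p) (F : (ℝ × ℝ) × ℝ → ℝ)
    {q : (ℝ × ℝ) × ℝ} (hy : 0 < q.1.2) (hz : 0 < q.2) (hzx : q.2 ≠ q.1.1) (hyp : q.1.2 ≠ p)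
    (hzp : q.2 ≠ p) (hxp : q.1.1 ≠ p + q.2) :
    {q : (ℝ × ℝ) × ℝ | q.2 ≤ q.1.1}.indicator (fun q => tailWeight p q * F q) q =
      (tailRegion p 0).indicator F q - (tailRegion p 1).indicator F q -
        (tailRegion p 2).indicator F q + (tailRegion p 3).indicator F q := by
  obtain ⟨⟨x, y⟩, z⟩ := q
  simp only [tailWeight, tailRegion, iteratedRegion, indicator_apply, mem_ofPred_eq, mem_Ioo,
    mem_Ioi, Pi.one_apply] at *
  split_ifs <;> first | ring1 | (exfalso; grind)

theorem ae_tailGenericPosition (p : ℝ) :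
    ∀ᵐ q ∂μ₃, 0 < q.1.2 ∧ 0 < q.2 ∧ q.2 ≠ q.1.1 ∧ q.1.2 ≠ p ∧ q.2 ≠ p ∧ q.1.1 ≠ p + q.2 := by
  have hy : ∀ᵐ w ∂μ₊.prod μ₊, 0 < w.2 ∧ w.2 ≠ p :=
    (Measure.ae_prod_iff_ae_ae (by measurability)).2 <| ae_of_all _ fun _ =>
      (ae_restrict_mem measurableSet_Ioi).and (ae_restrict_of_ae (Measure.ae_ne volume p))
  refine (Measure.ae_prod_iff_ae_ae (by measurability)).2 (hy.mono fun w hw => ?_)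
  filter_upwards [ae_restrict_mem measurableSet_Ioi, ae_restrict_of_ae (Measure.ae_ne volume w.1),
    ae_restrict_of_ae (Measure.ae_ne volume p), ae_restrict_of_ae (Measure.ae_ne volume (w.1 - p))]
    with z hz hzx hzp hxp
  exact ⟨hw.1, hz, hzx, hw.2, hzp, fun h => hxp (by linarith)⟩

theorem integral_tailWeight_mul_eq {F : (ℝ × ℝ) × ℝ → ℝ} (hF : Integrable F μ₃) {p : ℝ}
    (hp : 0 < p) :
    ∫ x in Ioi 0, ∫ y in Ioi 0, ∫ z in Ioc 0 x, tailWeight p ((x, y), z) * F ((x, y), z) =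
      ∫ q, (tailRegion p 0).indicator F q ∂μ₃ - ∫ q, (tailRegion p 1).indicator F q ∂μ₃ -
        ∫ q, (tailRegion p 2).indicator F q ∂μ₃ + ∫ q, (tailRegion p 3).indicator F q ∂μ₃ := by
  have hW : Integrable (fun q => tailWeight p q * F q) μ₃ := by
    refine hF.bdd_mul (c := 4) (Measurable.aestronglyMeasurable ?_) (ae_of_all _ fun q => ?_)
    · have hω : Measurable ((Ioi p).indicator (1 : ℝ → ℝ)) :=
        measurable_one.indicator measurableSet_Ioi
      unfold tailWeight
      fun_prop
    · simp only [tailWeight, indicator_apply, mem_Ioi, Pi.one_apply]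
      split_ifs <;> norm_num
  have hR (i : Fin 4) : Integrable ((tailRegion p i).indicator F) μ₃ :=
    hF.indicator (measurableSet_tailRegion p i)
  rw [integral_Ioc_eq_integral_indicator hW, integral_congr_ae ((ae_tailGenericPosition p).mono
    fun q ⟨hy, hz, hzx, hyp, hzp, hxp⟩ => tailWeight_indicator_eq hp F hy hz hzx hyp hzp hxp),
    integral_add _ (hR 3), integral_sub _ (hR 2), integral_sub (hR 0) (hR 1)]
  exacts [(hR 0).sub (hR 1), ((hR 0).sub (hR 1)).sub (hR 2)]

namespace IsWeakSolution

variable {A : ℝ → ℝ → ℝ → ℝ} {ζin : ℝ → ℝ} {ζ : ℝ → ℝ → ℝ}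

theorem integrableOn (hζ : IsWeakSolution A ζin ζ) {s : ℝ} (hs : 0 ≤ s) :
    IntegrableOn (ζ s) (Ioi 0) :=
  integrableOn_of_integrableOn_one_add_mul (hζ.mem s hs)

theorem measurable_piecewise_withDensity (hζ : IsWeakSolution A ζin ζ) (t : ℝ) :
    Measurable
      ((Icc 0 t).piecewise (fun s => μ₊.withDensity fun x => ENNReal.ofReal (ζ s x)) 0) := by
  refine Measure.measurable_of_measurable_coe _ fun S hS => ?_
  have hω : ∃ M, ∀ x, |S.indicator (1 : ℝ → ℝ) x| ≤ M :=
    ⟨1, fun x => by by_cases hx : x ∈ S <;> simp [hx]⟩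
  have hcont :
      ContinuousOn (fun s => (μ₊.withDensity fun x => ENNReal.ofReal (ζ s x)) S) (Icc 0 t) :=
    (ENNReal.continuous_ofReal.comp_continuousOn
      ((hζ.weakCont _ (measurable_one.indicator hS) hω).mono Icc_subset_Ici_self)).congr
      fun s hs => withDensity_ofReal_apply (hζ.nonneg s hs.1) (hζ.integrableOn hs.1) hS
  convert hcont.measurable_piecewise (continuousOn_const (c := (0 : ENNReal))) measurableSet_Icc
    using 1
  ext s
  by_cases hs : s ∈ Icc 0 t <;> simp [hs]

theorem withDensity_univ_le (hζ : IsWeakSolution A ζin ζ) {s C : ℝ} (hs : 0 ≤ s)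
    (hC : ∫ x in Ioi (0:ℝ), (1 + x) * ζ s x ≤ C) :
    (μ₊.withDensity fun x => ENNReal.ofReal (ζ s x)) univ ≤ ENNReal.ofReal C := by
  rw [withDensity_ofReal_apply (hζ.nonneg s hs) (hζ.integrableOn hs) MeasurableSet.univ]
  refine ENNReal.ofReal_le_ofReal (le_trans (integral_mono_of_nonneg ?_ (hζ.mem s hs) ?_) hC)
  · exact ae_of_all _ fun x => by simpa using hζ.nonneg s hs x
  · filter_upwards [ae_restrict_mem measurableSet_Ioi] with x hx
    simp only [mem_Ioi] at hx
    simp only [indicator_univ, Pi.one_apply, one_mul]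
    nlinarith [hζ.nonneg s hs x]

theorem intervalIntegrable_integral_indicator_kernelB (hζ : IsWeakSolution A ζin ζ)
    {ψ : ℝ → ℝ} (hA : Measurable (fun p : ℝ × ℝ × ℝ => A p.1 p.2.1 p.2.2))
    (hA0 : ∀ x y z, 0 ≤ A x y z) (hψ0 : ∀ z, 0 ≤ ψ z) (hψ : IntegrableOn ψ (Ioi 0))
    (hAψ : ∀ᵐ q ∂μ₃, A q.1.1 q.1.2 q.2 ≤ ψ q.2 * ((1 + q.1.1) * (1 + q.1.2)))
    {R : Set ((ℝ × ℝ) × ℝ)} (hR : MeasurableSet R) {t : ℝ} (ht : 0 ≤ t) :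
    IntervalIntegrable (fun s => ∫ q, R.indicator (kernelBUncurried A ζ s) q ∂μ₃)
      volume 0 t := by
  obtain ⟨C, hC⟩ := hζ.bdd (t + 1) (by linarith)
  have hCt : ∀ s ∈ Icc 0 t, ∫ x in Ioi (0:ℝ), (1 + x) * ζ s x ≤ C :=
    fun s hs => hC s ⟨hs.1, by linarith [hs.2]⟩
  -- Truncating to `[0, t]` makes `s ↦ ζ(s, x) dx` a finite kernel.
  have hκC : ∀ s, (Icc 0 t).piecewise
      (fun s => μ₊.withDensity fun x => ENNReal.ofReal (ζ s x)) 0 s univ ≤ ENNReal.ofReal C := by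
    intro s
    by_cases hs : s ∈ Icc 0 t
    · rw [piecewise_eq_of_mem _ _ _ hs]
      exact hζ.withDensity_univ_le hs.1 (hCt s hs)
    · simp [hs]
  have ha : Measurable (R.indicator fun q : (ℝ × ℝ) × ℝ => A q.1.1 q.1.2 q.2) :=
    (hA.comp MeasurableEquiv.prodAssoc.measurable).indicator hR
  have hG := ((hζ.measurable_piecewise_withDensity t).lintegral_prod_self ENNReal.ofReal_ne_top
    hκC (ha.ennreal_ofReal.lintegral_prod_right' (ν := μ₊))).ennreal_toReal
  rw [intervalIntegrable_iff_integrableOn_Ioc_of_le ht]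
  refine Integrable.mono' (g := fun _ => C ^ 2 * ∫ z in Ioi 0, ψ z)
    (integrableOn_const measure_Ioc_lt_top.ne) (hG.aestronglyMeasurable.congr ?_) ?_
  · filter_upwards [ae_restrict_mem measurableSet_Ioc] with s hs
    rw [piecewise_eq_of_mem _ _ _ (Ioc_subset_Icc_self hs), integral_indicator_kernelB_eq hA hA0 hR
      (hζ.nonneg s hs.1.le) (aestronglyMeasurable_of_integrableOn_one_add_mul (hζ.mem s hs.1.le))]
  · filter_upwards [ae_restrict_mem measurableSet_Ioc] with s hs
    have h0 : 0 ≤ ∫ x in Ioi (0:ℝ), (1 + x) * ζ s x := by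
      refine setIntegral_nonneg measurableSet_Ioi fun x hx => ?_
      have := hζ.nonneg s hs.1.le x
      simp only [mem_Ioi] at hx
      positivity
    refine (norm_integral_indicator_kernelB_le hA0 hψ hAψ (hζ.nonneg s hs.1.le)
      (hζ.mem s hs.1.le) R).trans ?_
    gcongr
    · exact setIntegral_nonneg measurableSet_Ioi fun z _ => hψ0 z
    · exact hCt s (Ioc_subset_Icc_self hs)

theorem setIntegral_Ioi_sub_eq_intervalIntegral (hζ : IsWeakSolution A ζin ζ) {ψ : ℝ → ℝ}
    (hA : Measurable (fun p : ℝ × ℝ × ℝ => A p.1 p.2.1 p.2.2))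
    (hA0 : ∀ x y z, 0 ≤ A x y z) (hψ0 : ∀ z, 0 ≤ ψ z) (hψ : IntegrableOn ψ (Ioi 0))
    (hAψ : ∀ᵐ q ∂μ₃, A q.1.1 q.1.2 q.2 ≤ ψ q.2 * ((1 + q.1.1) * (1 + q.1.2)))
    {p : ℝ} (hp : 0 < p) {t : ℝ} (ht : 0 ≤ t) :
    ∫ x in Ioi p, (ζ t x - ζin x) =
      (∫ s in (0:ℝ)..t, ∫ q, (tailRegion p 0).indicator (kernelBUncurried A ζ s) q ∂μ₃) -
        (∫ s in (0:ℝ)..t, ∫ q, (tailRegion p 1).indicator (kernelBUncurried A ζ s) q ∂μ₃) -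
        (∫ s in (0:ℝ)..t, ∫ q, (tailRegion p 2).indicator (kernelBUncurried A ζ s) q ∂μ₃) +
        ∫ s in (0:ℝ)..t, ∫ q, (tailRegion p 3).indicator (kernelBUncurried A ζ s) q ∂μ₃ := by
  have hG (i : Fin 4) :
      IntervalIntegrable (fun s => ∫ q, (tailRegion p i).indicator (kernelBUncurried A ζ s) q ∂μ₃)
        volume 0 t :=
    hζ.intervalIntegrable_integral_indicator_kernelB hA hA0 hψ0 hψ hAψ
      (measurableSet_tailRegion p i) ht
  have hω : ∃ M, ∀ x, |(Ioi p).indicator (1 : ℝ → ℝ) x| ≤ M :=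
    ⟨1, fun x => by by_cases hx : x ∈ Ioi p <;> simp [hx]⟩
  have hweak := hζ.weakForm _ (measurable_one.indicator measurableSet_Ioi) hω t ht
  rw [integral_indicator_one_mul measurableSet_Ioi, Measure.restrict_restrict measurableSet_Ioi,
    inter_eq_left.2 (Ioi_subset_Ioi hp.le)] at hweak
  rw [hweak, weakRHS, ← intervalIntegral.integral_sub (hG 0) (hG 1),
    ← intervalIntegral.integral_sub ((hG 0).sub (hG 1)) (hG 2),
    ← intervalIntegral.integral_add (((hG 0).sub (hG 1)).sub (hG 2)) (hG 3)]
  refine intervalIntegral.integral_congr fun s hs =>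
    integral_tailWeight_mul_eq (F := kernelBUncurried A ζ s) ?_ hp
  rw [uIcc_of_le ht] at hs
  exact integrable_kernelB hA hA0 hψ hAψ (hζ.nonneg s hs.1) (hζ.mem s hs.1)

theorem setIntegral_Ioi_sub_eq (hζ : IsWeakSolution A ζin ζ) {ψ : ℝ → ℝ}
    (hA : Measurable (fun p : ℝ × ℝ × ℝ => A p.1 p.2.1 p.2.2))
    (hA0 : ∀ x y z, 0 ≤ A x y z) (hψ0 : ∀ z, 0 ≤ ψ z) (hψ : IntegrableOn ψ (Ioi 0))
    (hAψ : ∀ᵐ q ∂μ₃, A q.1.1 q.1.2 q.2 ≤ ψ q.2 * ((1 + q.1.1) * (1 + q.1.2)))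
    {p : ℝ} (hp : 0 < p) {t : ℝ} (ht : 0 ≤ t) :
    ∫ x in Ioi p, (ζ t x - ζin x) =
      (∫ s in (0:ℝ)..t, ∫ z in Ioo (0:ℝ) p, ∫ y in Ioo (p - z) p, ∫ x in Ioi z,
          kernelB A ζ s x y z)
      - (∫ s in (0:ℝ)..t, ∫ z in Ioi p, ∫ y in Ioi p, ∫ x in Ioi z,
          kernelB A ζ s x y z)
      - (∫ s in (0:ℝ)..t, ∫ z in Ioo (0:ℝ) p, ∫ y in Ioi (0:ℝ), ∫ x in Ioo p (p + z),
          kernelB A ζ s x y z)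
      + (∫ s in (0:ℝ)..t, ∫ z in Ioi p, ∫ y in Ioi (0:ℝ), ∫ x in Ioi (p + z),
          kernelB A ζ s x y z) := by
  have hF : ∀ s ∈ uIcc 0 t, Integrable (kernelBUncurried A ζ s) μ₃ := by
    intro s hs
    rw [uIcc_of_le ht] at hs
    exact integrable_kernelB hA hA0 hψ hAψ (hζ.nonneg s hs.1) (hζ.mem s hs.1)
  rw [hζ.setIntegral_Ioi_sub_eq_intervalIntegral hA hA0 hψ0 hψ hAψ hp ht]
  congr 1; congr 1; congr 1
  all_goals refine intervalIntegral.integral_congr fun s hs => ?_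
  · exact integral_indicator_iteratedRegion (hF s hs) measurableSet_Ioo
      (fun _ => measurableSet_Ioo) (fun _ => measurableSet_Ioi) (measurableSet_tailRegion p 0)
      Ioo_subset_Ioi_self
      (fun z hz => Ioo_subset_Ioi_self.trans (Ioi_subset_Ioi (sub_pos.2 hz.2).le))
      (fun z hz => Ioi_subset_Ioi hz.1.le)
  · exact integral_indicator_iteratedRegion (hF s hs) measurableSet_Ioi
      (fun _ => measurableSet_Ioi) (fun _ => measurableSet_Ioi) (measurableSet_tailRegion p 1)
      (Ioi_subset_Ioi hp.le) (fun _ _ => Ioi_subset_Ioi hp.le)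
      (fun z hz => Ioi_subset_Ioi (hp.trans hz).le)
  · exact integral_indicator_iteratedRegion (hF s hs) measurableSet_Ioo
      (fun _ => measurableSet_Ioi) (fun _ => measurableSet_Ioo) (measurableSet_tailRegion p 2)
      Ioo_subset_Ioi_self (fun _ _ => subset_rfl)
      (fun _ _ => Ioo_subset_Ioi_self.trans (Ioi_subset_Ioi hp.le))
  · exact integral_indicator_iteratedRegion (hF s hs) measurableSet_Ioi
      (fun _ => measurableSet_Ioi) (fun _ => measurableSet_Ioi) (measurableSet_tailRegion p 3)
      (Ioi_subset_Ioi hp.le) (fun _ _ => subset_rfl)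
      (fun z hz => Ioi_subset_Ioi (by linarith [hz.out]))

end IsWeakSolution

theorem tendsto_mul_setIntegral_Ioi_atTop {f : ℝ → ℝ}
    (hf : IntegrableOn (fun x => (1 + x) * f x) (Ioi 0)) :
    Tendsto (fun p => p * ∫ x in Ioi p, f x) atTop (nhds 0) := by
  have htail : Tendsto (fun p : ℝ => ∫ x in Ioi p, ‖(1 + x) * f x‖) atTop (nhds 0) := by
    have hempty : ⋂ p : ℝ, Ioi p = ∅ :=
      eq_empty_of_forall_notMem fun x hx => lt_irrefl x (mem_iInter.1 hx x)
    simpa [hempty] using tendsto_setIntegral_of_antitone (fun _ => measurableSet_Ioi)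
      (fun _ _ h => Ioi_subset_Ioi h) ⟨0, hf.norm⟩
  refine squeeze_zero_norm' ?_ htail
  filter_upwards [eventually_gt_atTop 0] with p hp
  rw [← integral_const_mul]
  refine norm_integral_le_of_norm_le (IntegrableOn.mono_set hf.norm (Ioi_subset_Ioi hp.le)) ?_
  filter_upwards [ae_restrict_mem measurableSet_Ioi] with x hx
  have hpx : p < x := hx
  rw [norm_mul, norm_mul, Real.norm_of_nonneg hp.le,
    Real.norm_of_nonneg (by linarith : (0:ℝ) ≤ 1 + x)]
  gcongr
  linarith

theorem weak_solution_tail_identity_general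
    (A : ℝ → ℝ → ℝ → ℝ) (φ ζin : ℝ → ℝ) (c : ℝ) (hc : 0 ≤ c)
    (hA_meas : Measurable (fun p : ℝ × ℝ × ℝ => A p.1 p.2.1 p.2.2))
    (hA_nonneg : ∀ x y z, 0 ≤ A x y z)
    (hsum₁ : ∀ x y z, 0 < x → 0 < y → 0 < z → x + y < 1 → A x y z ≤ c * φ z)
    (hsum₂ : ∀ x y z, 0 < x → 0 < y → 0 < z → 1 < x + y → A x y z ≤ c * (x + y) * φ z)
    (hφ_nonneg : ∀ x, 0 ≤ φ x)
    (hφ_int : IntegrableOn (fun x => (1 + x) * φ x) (Ioi 0))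
    (hζin_int : IntegrableOn (fun x => (1 + x) * ζin x) (Ioi 0))
    (ζ : ℝ → ℝ → ℝ) (hζ : IsWeakSolution A ζin ζ) :
    (∀ p : ℝ, 0 < p → ∀ t : ℝ, 0 ≤ t →
      ∫ x in Ioi p, (ζ t x - ζin x) =
        (∫ s in (0:ℝ)..t, ∫ z in Ioo (0:ℝ) p, ∫ y in Ioo (p - z) p, ∫ x in Ioi z,
            kernelB A ζ s x y z)
        - (∫ s in (0:ℝ)..t, ∫ z in Ioi p, ∫ y in Ioi p, ∫ x in Ioi z,
            kernelB A ζ s x y z)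
        - (∫ s in (0:ℝ)..t, ∫ z in Ioo (0:ℝ) p, ∫ y in Ioi (0:ℝ), ∫ x in Ioo p (p + z),
            kernelB A ζ s x y z)
        + (∫ s in (0:ℝ)..t, ∫ z in Ioi p, ∫ y in Ioi (0:ℝ), ∫ x in Ioi (p + z),
            kernelB A ζ s x y z)) ∧
    (∀ t : ℝ, 0 ≤ t →
      Tendsto (fun p : ℝ => p * ∫ x in Ioi p, (ζ t x - ζin x)) atTop (nhds 0)) := by
  refine ⟨fun p hp t ht => ?_, fun t ht => ?_⟩
  · exact hζ.setIntegral_Ioi_sub_eq hA_meas hA_nonneg (fun z => mul_nonneg hc (hφ_nonneg z))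
      ((integrableOn_of_integrableOn_one_add_mul hφ_int).const_mul c)
      (ae_le_of_sum_type_bound hc hφ_nonneg hsum₁ hsum₂) hp ht
  · refine tendsto_mul_setIntegral_Ioi_atTop
      (((hζ.mem t ht).sub hζin_int).congr_fun (fun x _ => ?_) measurableSet_Ioi)
    simp only [Pi.sub_apply, mul_sub]

/-- **Tail identity and vanishing tail for weak solutions (sum-type kernels).**
For every `p > 0` and `t ≥ 0`, `∫_p^∞ [ζ(t,x) − ζin(x)] dx` equals the stated
combination of four quadruple integrals of `ℬ(x,y;z,ζ(s)) = 𝒜(x,y;z) ζ(s,x) ζ(s,y)`,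
and moreover `p ∫_p^∞ [ζ(t,x) − ζin(x)] dx → 0` as `p → ∞`. -/
theorem weak_solution_tail_identity
    (A : ℝ → ℝ → ℝ → ℝ) (φ ζin : ℝ → ℝ) (c : ℝ) (hc : 0 ≤ c)
    (hA_meas : Measurable (fun p : ℝ × ℝ × ℝ => A p.1 p.2.1 p.2.2))
    (hA_nonneg : ∀ x y z, 0 ≤ A x y z)
    (hphys : ∀ x y z, x < z → A x y z = 0)
    (hsum₁ : ∀ x y z, 0 < x → 0 < y → 0 < z → x + y < 1 → A x y z ≤ c * φ z)
    (hsum₂ : ∀ x y z, 0 < x → 0 < y → 0 < z → 1 < x + y → A x y z ≤ c * (x + y) * φ z)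
    (hφ_nonneg : ∀ x, 0 ≤ φ x)
    (hφ_int : IntegrableOn (fun x => (1 + x) * φ x) (Ioi 0))
    (hζin_nonneg : ∀ x, 0 ≤ ζin x)
    (hζin_int : IntegrableOn (fun x => (1 + x) * ζin x) (Ioi 0))
    (ζ : ℝ → ℝ → ℝ) (hζ : IsWeakSolution A ζin ζ) :
    (∀ p : ℝ, 0 < p → ∀ t : ℝ, 0 ≤ t →
      ∫ x in Ioi p, (ζ t x - ζin x) =
        (∫ s in (0:ℝ)..t, ∫ z in Ioo (0:ℝ) p, ∫ y in Ioo (p - z) p, ∫ x in Ioi z,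
            kernelB A ζ s x y z)
        - (∫ s in (0:ℝ)..t, ∫ z in Ioi p, ∫ y in Ioi p, ∫ x in Ioi z,
            kernelB A ζ s x y z)
        - (∫ s in (0:ℝ)..t, ∫ z in Ioo (0:ℝ) p, ∫ y in Ioi (0:ℝ), ∫ x in Ioo p (p + z),
            kernelB A ζ s x y z)
        + (∫ s in (0:ℝ)..t, ∫ z in Ioi p, ∫ y in Ioi (0:ℝ), ∫ x in Ioi (p + z),
            kernelB A ζ s x y z)) ∧
    (∀ t : ℝ, 0 ≤ t →
      Tendsto (fun p : ℝ => p * ∫ x in Ioi p, (ζ t x - ζin x)) atTop (nhds 0)) :=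
  weak_solution_tail_identity_general A φ ζin c hc hA_meas hA_nonneg hsum₁ hsum₂ hφ_nonneg hφ_int
    hζin_int ζ hζ
end

section
/- Let ζ be a weak solution of the continuous generalized exchange-driven growth equation with initial datum ζ^in ∈ L¹((0,∞),(1+x)dx), where the kernel 𝒜 satisfies 𝒜(x,y;z)=0 for z>x and the sum-type bound 𝒜(x,y;z) ≤ A φ(z) for x+y<1 and 𝒜(x,y;z) ≤ A(x+y)φ(z) for x+y>1, with φ a nonnegative function in L¹((0,∞),(1+x)dx). Then, writing ℬ(x,y;z,ζ(s)) := 𝒜(x,y;z) ζ(s,x) ζ(s,y), for every t ≥ 0: (i) lim_{p→∞} p ∫₀^t ∫_p^∞ ∫_p^∞ ∫_z^∞ ℬ(x,y;z,ζ(s)) dx dy dz ds = 0, and (ii) lim_{p→∞} p ∫₀^t ∫_p^∞ ∫₀^∞ ∫_{p+z}^∞ ℬ(x,y;z,ζ(s)) dx dy dz ds = 0. -/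
open MeasureTheory Set Filter

/-! For `z > p ≥ 1` and `x > z` the sum-type bound gives
`𝒜(x,y;z) ≤ c (x + y) φ(z) ≤ c (1 + x)(1 + y) φ(z)`, so for each time the two inner
integrals of `ℬ` are at most `c φ(z) C²`, where `C` bounds the first moment of `ζ` on `[0, t]`.
Since `z > p`, the factor `p` is absorbed into the weight: `p φ(z) ≤ (1 + z) φ(z)`, and the
resulting tail `∫_p^∞ (1 + z) φ(z) dz` of an integrable function tends to zero. -/

lemma setIntegral_mono_on_of_nonneg {X : Type*} [MeasurableSpace X] {μ : Measure X}
    {f g : X → ℝ} {s : Set X} (hs : MeasurableSet s) (hg : IntegrableOn g s μ)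
    (hf : ∀ x ∈ s, 0 ≤ f x) (hfg : ∀ x ∈ s, f x ≤ g x) :
    ∫ x in s, f x ∂μ ≤ ∫ x in s, g x ∂μ :=
  integral_mono_of_nonneg (ae_restrict_of_forall_mem hs hf) hg (ae_restrict_of_forall_mem hs hfg)

lemma setIntegral_Ioi_le_of_le {f : ℝ → ℝ} {a b : ℝ} (hab : a ≤ b)
    (hf : ∀ x, a < x → 0 ≤ f x) (hfi : IntegrableOn f (Ioi a)) :
    ∫ x in Ioi b, f x ≤ ∫ x in Ioi a, f x :=
  setIntegral_mono_set hfi (ae_restrict_of_forall_mem measurableSet_Ioi hf)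
    (Ioi_subset_Ioi hab).eventuallyLE

lemma setIntegral_Ioi_Ioi_le_mul_sq {g : ℝ → ℝ → ℝ} {f : ℝ → ℝ} {K α β : ℝ} (hK : 0 ≤ K)
    (hα : 0 ≤ α) (hβ : 0 ≤ β) (hf : ∀ x, 0 < x → 0 ≤ f x) (hfi : IntegrableOn f (Ioi 0))
    (hg₀ : ∀ y, α < y → ∀ x, β < x → 0 ≤ g y x)
    (hg : ∀ y, α < y → ∀ x, β < x → g y x ≤ K * f x * f y) :
    ∫ y in Ioi α, ∫ x in Ioi β, g y x ≤ K * (∫ x in Ioi 0, f x) ^ 2 := by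
  set I := ∫ x in Ioi 0, f x
  have hI : 0 ≤ I := setIntegral_nonneg measurableSet_Ioi hf
  have inner : ∀ y, α < y → ∫ x in Ioi β, g y x ≤ K * I * f y := by
    intro y hy
    have hfy : 0 ≤ f y := hf y (hα.trans_lt hy)
    calc ∫ x in Ioi β, g y x ≤ ∫ x in Ioi β, K * f y * f x :=
          setIntegral_mono_on_of_nonneg measurableSet_Ioi
            ((hfi.mono_set (Ioi_subset_Ioi hβ)).const_mul _) (hg₀ y hy)
            (fun x hx => (hg y hy x hx).trans_eq (by ring))
      _ = K * f y * ∫ x in Ioi β, f x := integral_const_mul _ _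
      _ ≤ K * f y * I := by gcongr; exact setIntegral_Ioi_le_of_le hβ hf hfi
      _ = K * I * f y := by ring
  calc ∫ y in Ioi α, ∫ x in Ioi β, g y x ≤ ∫ y in Ioi α, K * I * f y :=
        setIntegral_mono_on_of_nonneg measurableSet_Ioi
          ((hfi.mono_set (Ioi_subset_Ioi hα)).const_mul _)
          (fun y hy => setIntegral_nonneg measurableSet_Ioi (hg₀ y hy)) inner
    _ = K * I * ∫ y in Ioi α, f y := integral_const_mul _ _
    _ ≤ K * I * I := by gcongr; exact setIntegral_Ioi_le_of_le hα hf hfi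
    _ = K * I ^ 2 := by ring

lemma mul_setIntegral_Ioi_le {G φ : ℝ → ℝ} {K p : ℝ} (hK : 0 ≤ K) (hp : 0 ≤ p)
    (hφ : ∀ z, 0 ≤ φ z) (hφi : IntegrableOn (fun z => (1 + z) * φ z) (Ioi p))
    (hG₀ : ∀ z, p < z → 0 ≤ G z) (hG : ∀ z, p < z → G z ≤ K * φ z) :
    p * ∫ z in Ioi p, G z ≤ K * ∫ z in Ioi p, (1 + z) * φ z := by
  rw [← integral_const_mul, ← integral_const_mul]
  refine setIntegral_mono_on_of_nonneg measurableSet_Ioi (hφi.const_mul K)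
    (fun z hz => mul_nonneg hp (hG₀ z hz)) fun z (hz : p < z) => ?_
  have := mul_nonneg hK (hφ z)
  nlinarith [hG z hz, hG₀ z hz]

section SumKernel

variable {A : ℝ → ℝ → ℝ → ℝ} {φ : ℝ → ℝ} {c : ℝ}

lemma kernelB_nonneg (hA_nonneg : ∀ x y z, 0 ≤ A x y z) {ζ : ℝ → ℝ → ℝ} {s : ℝ}
    (hζ : ∀ x, 0 ≤ ζ s x) (x y z : ℝ) : 0 ≤ kernelB A ζ s x y z :=
  mul_nonneg (mul_nonneg (hA_nonneg x y z) (hζ x)) (hζ y)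

lemma integral_integral_kernelB_le (hc : 0 ≤ c) (hA_nonneg : ∀ x y z, 0 ≤ A x y z)
    (hsum₂ : ∀ x y z, 0 < x → 0 < y → 0 < z → 1 < x + y → A x y z ≤ c * (x + y) * φ z)
    (hφ_nonneg : ∀ x, 0 ≤ φ x) {ζ : ℝ → ℝ → ℝ} {s : ℝ} (hζ : ∀ x, 0 ≤ ζ s x)
    (hζi : IntegrableOn (fun x => (1 + x) * ζ s x) (Ioi 0)) {z α β : ℝ} (hz : 0 < z)
    (hα : 0 ≤ α) (hβ : 1 ≤ β) :
    ∫ y in Ioi α, ∫ x in Ioi β, kernelB A ζ s x y z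
      ≤ c * φ z * (∫ x in Ioi 0, (1 + x) * ζ s x) ^ 2 := by
  refine setIntegral_Ioi_Ioi_le_mul_sq (mul_nonneg hc (hφ_nonneg z)) hα (by linarith)
    (fun x hx => mul_nonneg (by linarith) (hζ x)) hζi
    (fun y _ x _ => kernelB_nonneg hA_nonneg hζ x y z) fun y hy x hx => ?_
  have hy0 : 0 < y := hα.trans_lt hy
  have hA := hsum₂ x y z (by linarith) hy0 hz (by linarith)
  have hxy : x + y ≤ (1 + x) * (1 + y) := by nlinarith
  calc kernelB A ζ s x y z ≤ c * (x + y) * φ z * ζ s x * ζ s y := by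
        unfold kernelB; gcongr <;> exact hζ _
    _ ≤ c * ((1 + x) * (1 + y)) * φ z * ζ s x * ζ s y := by
        gcongr <;> first | exact hζ _ | exact hφ_nonneg _
    _ = c * φ z * ((1 + x) * ζ s x) * ((1 + y) * ζ s y) := by ring

lemma abs_mul_tail_kernelB_le (hc : 0 ≤ c) (hA_nonneg : ∀ x y z, 0 ≤ A x y z)
    (hsum₂ : ∀ x y z, 0 < x → 0 < y → 0 < z → 1 < x + y → A x y z ≤ c * (x + y) * φ z)
    (hφ_nonneg : ∀ x, 0 ≤ φ x) (hφ_int : IntegrableOn (fun x => (1 + x) * φ x) (Ioi 0))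
    {ζ : ℝ → ℝ → ℝ} {s : ℝ} (hζ : ∀ x, 0 ≤ ζ s x)
    (hζi : IntegrableOn (fun x => (1 + x) * ζ s x) (Ioi 0)) {C : ℝ}
    (hC : ∫ x in Ioi 0, (1 + x) * ζ s x ≤ C) {p α : ℝ} {β : ℝ → ℝ} (hp : 1 ≤ p) (hα : 0 ≤ α)
    (hβ : ∀ z, p < z → z ≤ β z) :
    |p * ∫ z in Ioi p, ∫ y in Ioi α, ∫ x in Ioi (β z), kernelB A ζ s x y z|
      ≤ c * C ^ 2 * ∫ z in Ioi p, (1 + z) * φ z := by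
  have hI : 0 ≤ ∫ x in Ioi 0, (1 + x) * ζ s x :=
    setIntegral_nonneg measurableSet_Ioi fun x (hx : 0 < x) => mul_nonneg (by linarith) (hζ x)
  have hG₀ : ∀ z, p < z → 0 ≤ ∫ y in Ioi α, ∫ x in Ioi (β z), kernelB A ζ s x y z :=
    fun z _ => setIntegral_nonneg measurableSet_Ioi fun y _ =>
      setIntegral_nonneg measurableSet_Ioi fun x _ => kernelB_nonneg hA_nonneg hζ x y z
  rw [abs_of_nonneg (mul_nonneg (by linarith) (setIntegral_nonneg measurableSet_Ioi hG₀))]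
  refine mul_setIntegral_Ioi_le (mul_nonneg hc (sq_nonneg C)) (by linarith) hφ_nonneg
    (hφ_int.mono_set (Ioi_subset_Ioi (by linarith))) hG₀ fun z hz => ?_
  calc ∫ y in Ioi α, ∫ x in Ioi (β z), kernelB A ζ s x y z
      ≤ c * φ z * (∫ x in Ioi 0, (1 + x) * ζ s x) ^ 2 :=
        integral_integral_kernelB_le hc hA_nonneg hsum₂ hφ_nonneg hζ hζi (by linarith) hα
          (by linarith [hβ z hz])
    _ ≤ c * φ z * C ^ 2 := by gcongr; exact mul_nonneg hc (hφ_nonneg z)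
    _ = c * C ^ 2 * φ z := by ring

lemma norm_mul_tail_kernelB_le {ζin : ℝ → ℝ} {ζ : ℝ → ℝ → ℝ} (hc : 0 ≤ c)
    (hA_nonneg : ∀ x y z, 0 ≤ A x y z)
    (hsum₂ : ∀ x y z, 0 < x → 0 < y → 0 < z → 1 < x + y → A x y z ≤ c * (x + y) * φ z)
    (hφ_nonneg : ∀ x, 0 ≤ φ x) (hφ_int : IntegrableOn (fun x => (1 + x) * φ x) (Ioi 0))
    (hζ : IsWeakSolution A ζin ζ) {t C : ℝ} (ht : 0 ≤ t)
    (hC : ∀ s ∈ Icc 0 t, ∫ x in Ioi 0, (1 + x) * ζ s x ≤ C) {p α : ℝ} {β : ℝ → ℝ}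
    (hp : 1 ≤ p) (hα : 0 ≤ α) (hβ : ∀ z, p < z → z ≤ β z) :
    ‖p * ∫ s in (0:ℝ)..t, ∫ z in Ioi p, ∫ y in Ioi α, ∫ x in Ioi (β z), kernelB A ζ s x y z‖
      ≤ c * C ^ 2 * (∫ z in Ioi p, (1 + z) * φ z) * t := by
  rw [← intervalIntegral.integral_const_mul]
  refine (intervalIntegral.norm_integral_le_of_norm_le_const fun s hs => ?_).trans_eq
    (by rw [sub_zero, abs_of_nonneg ht])
  rw [uIoc_of_le ht] at hs
  exact abs_mul_tail_kernelB_le hc hA_nonneg hsum₂ hφ_nonneg hφ_int (hζ.nonneg s hs.1.le)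
    (hζ.mem s hs.1.le) (hC s (Ioc_subset_Icc_self hs)) hp hα hβ

end SumKernel

theorem weak_solution_tail_integrals_vanish_general
    (A : ℝ → ℝ → ℝ → ℝ) (φ ζin : ℝ → ℝ) (c : ℝ) (hc : 0 ≤ c)
    (hA_nonneg : ∀ x y z, 0 ≤ A x y z)
    (hsum₂ : ∀ x y z, 0 < x → 0 < y → 0 < z → 1 < x + y → A x y z ≤ c * (x + y) * φ z)
    (hφ_nonneg : ∀ x, 0 ≤ φ x)
    (hφ_int : IntegrableOn (fun x => (1 + x) * φ x) (Ioi 0))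
    (ζ : ℝ → ℝ → ℝ) (hζ : IsWeakSolution A ζin ζ) :
    ∀ t : ℝ, 0 ≤ t →
      Tendsto (fun p : ℝ => p * ∫ s in (0:ℝ)..t, ∫ z in Ioi p, ∫ y in Ioi p,
          ∫ x in Ioi z, kernelB A ζ s x y z) atTop (nhds 0) ∧
      Tendsto (fun p : ℝ => p * ∫ s in (0:ℝ)..t, ∫ z in Ioi p, ∫ y in Ioi (0:ℝ),
          ∫ x in Ioi (p + z), kernelB A ζ s x y z) atTop (nhds 0) := by
  intro t ht
  obtain ⟨C, hC⟩ := hζ.bdd (t + 1) (by linarith)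
  have hCt : ∀ s ∈ Icc 0 t, ∫ x in Ioi 0, (1 + x) * ζ s x ≤ C :=
    fun s hs => hC s ⟨hs.1, by linarith [hs.2]⟩
  have hmaj : Tendsto (fun p => c * C ^ 2 * (∫ z in Ioi p, (1 + z) * φ z) * t) atTop (nhds 0) :=
    by simpa using ((tendsto_integral_Ioi_zero tendsto_id).const_mul (c * C ^ 2)).mul_const t
  refine ⟨squeeze_zero_norm' ?_ hmaj, squeeze_zero_norm' ?_ hmaj⟩ <;>
    filter_upwards [eventually_ge_atTop 1] with p hp
  · exact norm_mul_tail_kernelB_le hc hA_nonneg hsum₂ hφ_nonneg hφ_int hζ ht hCt hp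
      (by linarith) fun z _ => le_rfl
  · exact norm_mul_tail_kernelB_le hc hA_nonneg hsum₂ hφ_nonneg hφ_int hζ ht hCt hp le_rfl
      fun z _ => by linarith

/-- **Vanishing of two weighted tail integrals (sum-type kernels).** For a weak
solution `ζ` and each `t ≥ 0`, both
`p ∫₀^t ∫_p^∞ ∫_p^∞ ∫_z^∞ ℬ dx dy dz ds` and
`p ∫₀^t ∫_p^∞ ∫₀^∞ ∫_{p+z}^∞ ℬ dx dy dz ds` tend to `0` as `p → ∞`. -/
theorem weak_solution_tail_integrals_vanish
    (A : ℝ → ℝ → ℝ → ℝ) (φ ζin : ℝ → ℝ) (c : ℝ) (hc : 0 ≤ c)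
    (hA_meas : Measurable (fun p : ℝ × ℝ × ℝ => A p.1 p.2.1 p.2.2))
    (hA_nonneg : ∀ x y z, 0 ≤ A x y z)
    (hphys : ∀ x y z, x < z → A x y z = 0)
    (hsum₁ : ∀ x y z, 0 < x → 0 < y → 0 < z → x + y < 1 → A x y z ≤ c * φ z)
    (hsum₂ : ∀ x y z, 0 < x → 0 < y → 0 < z → 1 < x + y → A x y z ≤ c * (x + y) * φ z)
    (hφ_nonneg : ∀ x, 0 ≤ φ x)
    (hφ_int : IntegrableOn (fun x => (1 + x) * φ x) (Ioi 0))
    (hζin_nonneg : ∀ x, 0 ≤ ζin x)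
    (hζin_int : IntegrableOn (fun x => (1 + x) * ζin x) (Ioi 0))
    (ζ : ℝ → ℝ → ℝ) (hζ : IsWeakSolution A ζin ζ) :
    ∀ t : ℝ, 0 ≤ t →
      Tendsto (fun p : ℝ => p * ∫ s in (0:ℝ)..t, ∫ z in Ioi p, ∫ y in Ioi p,
          ∫ x in Ioi z, kernelB A ζ s x y z) atTop (nhds 0) ∧
      Tendsto (fun p : ℝ => p * ∫ s in (0:ℝ)..t, ∫ z in Ioi p, ∫ y in Ioi (0:ℝ),
          ∫ x in Ioi (p + z), kernelB A ζ s x y z) atTop (nhds 0) :=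
  weak_solution_tail_integrals_vanish_general A φ ζin c hc hA_nonneg hsum₂ hφ_nonneg hφ_int ζ hζ
end
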